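/- arXiv:2311.07356 — 7 statements merged into one kernel-verified Lean document; each statement's English description precedes it below -/
import Mathlib

section
/- Let K be a formally real field, let s > 1 be an integer, and let g ∈ K[x,y] be a polynomial of 2s-length k, i.e., g is a sum of k 2s-th powers of elements of K[x,y] but not a sum of k−1 such powers. Let r be a positive integer such that the degree of g in the variable x is strictly less than 2sr. Then the polynomial G(x,y) = g(x,y)·(y − x^r)^{2s} + 1 has 2s-length exactly k + 1 in K[x,y]. -/
/-!
Write `t = y - x^r` and suppose `G = g t^{2s} + 1 = ∑_{i<k} f_i^{2s}`. Since `K` is formally real,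
the leading coefficients of the `f_i^{2s}` cannot cancel, in `K[x]` nor in `K[y][x]`. After the
substitution `y ↦ x^r`, which kills exactly the multiples of `t`, this forces `f_i = c_i + t u_i`
with constants `c_i`, `∑ c_i^{2s} = 1`, and `deg_x u_i < r` (because `deg_x G < 4sr`). Expanding
to second order in `t`, the first-order term `∑ c_i^{2s-1} u_i` is divisible by `t` and has
`x`-degree below `r`, hence vanishes; then `t` divides `∑ c_i^{2s-2} u_i^2`, so after substitution
a sum of squares vanishes and `c_i u_i = 0` for every `i`. Thus `g = ∑ u_i^{2s}` with
`u_i = 0` whenever `c_i ≠ 0`, and some `c_i` is nonzero: `g` would have length at most `k - 1`.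
-/

open MvPolynomial Finset

theorem IsSumSq.map {R S : Type*} [CommSemiring R] [CommSemiring S] (f : R →+* S) {s : R}
    (hs : IsSumSq s) : IsSumSq (f s) := by
  induction hs with
  | zero => simp
  | sq_add a _ ih => simpa using .sq_add (f a) ih

theorem IsSumSq.exists_fin_sum_sq {R : Type*} [CommSemiring R] {s : R} (hs : IsSumSq s) :
    ∃ (n : ℕ) (x : Fin n → R), s = ∑ i, x i ^ 2 := by
  induction hs with
  | zero => exact ⟨0, ![], by simp⟩
  | sq_add a _ ih =>
    obtain ⟨n, x, rfl⟩ := ih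
    exact ⟨n + 1, Fin.cons a x, by simp [Fin.sum_univ_succ, sq]⟩

namespace IsFormallyReal

variable {R : Type*} [CommRing R] [IsFormallyReal R]

theorem eq_zero_of_mul_self_add {a s : R} (hs : IsSumSq s) (h : a * a + s = 0) : a = 0 :=
  IsReduced.eq_zero a ⟨2, by rw [sq]; exact eq_zero_of_add_right (.mul_self a) hs h⟩

theorem eq_zero_of_sum_sq_eq_zero {ι : Type*} [DecidableEq ι] {I : Finset ι} {x : ι → R}
    (h : ∑ i ∈ I, x i ^ 2 = 0) {i : ι} (hi : i ∈ I) : x i = 0 := by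
  rw [← add_sum_erase I _ hi, sq] at h
  exact eq_zero_of_mul_self_add (IsSumSq.sum_sq _ _) h

theorem of_injective {S : Type*} [CommRing S] (f : S →+* R) (hf : Function.Injective f) :
    IsFormallyReal S :=
  of_eq_zero_of_eq_zero_of_mul_self_add fun hs h =>
    hf <| by simpa using eq_zero_of_mul_self_add (hs.map f) (by simpa using congr(f $h))

end IsFormallyReal

theorem IsSemireal.isFormallyReal {K : Type*} [Field K] [IsSemireal K] : IsFormallyReal K :=
  IsFormallyReal.of_eq_zero_of_eq_zero_of_mul_self_add fun {s a} hs h => by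
    by_contra ha
    apply IsSemireal.not_isSumSq_neg_one K
    have hneg : -1 = s * (a⁻¹ * a⁻¹) := by field_simp; linear_combination -h
    rw [hneg]
    exact hs.mul (.mul_self _)

namespace Polynomial

variable {R ι : Type*} [CommRing R]

theorem coeff_sum_pow_mul_sup (I : Finset ι) (p : ι → R[X]) (n : ℕ) :
    (∑ i ∈ I, p i ^ n).coeff (n * I.sup fun i => (p i).natDegree) =
      ∑ i ∈ I, (p i).coeff (I.sup fun i => (p i).natDegree) ^ n := by
  rw [finsetSum_coeff]
  exact sum_congr rfl fun i hi =>
    coeff_pow_of_natDegree_le (le_sup (f := fun i => (p i).natDegree) hi)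

variable [IsFormallyReal R]

theorem natDegree_sum_pow_two_mul (I : Finset ι) (p : ι → R[X]) (s : ℕ) :
    (∑ i ∈ I, p i ^ (2 * s)).natDegree = 2 * s * I.sup fun i => (p i).natDegree := by
  classical
  set D := I.sup fun i => (p i).natDegree
  refine le_antisymm (natDegree_sum_le_of_forall_le _ _ fun i hi => natDegree_pow_le.trans
    (Nat.mul_le_mul_left _ (le_sup (f := fun i => (p i).natDegree) hi))) ?_
  rcases Nat.eq_zero_or_pos (2 * s * D) with h0 | hpos
  · omega
  have hI : I.Nonempty := nonempty_iff_ne_empty.mpr fun h => by simp [D, h] at hpos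
  obtain ⟨i, hi, hiD⟩ := exists_mem_eq_sup I hI fun i => (p i).natDegree
  refine le_natDegree_of_ne_zero fun h => ?_
  rw [coeff_sum_pow_mul_sup] at h
  have hlead : (p i).coeff D ^ s = 0 := by
    refine IsFormallyReal.eq_zero_of_sum_sq_eq_zero (x := fun j => (p j).coeff D ^ s) ?_ hi
    simpa only [← pow_mul, mul_comm s 2] using h
  rw [show D = (p i).natDegree from hiD, coeff_natDegree] at hlead
  have hpi : p i ≠ 0 := by
    rintro h0
    simp [D, hiD, h0] at hpos
  exact hpi (leadingCoeff_eq_zero.mp (IsReduced.eq_zero _ ⟨s, hlead⟩))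

theorem eq_zero_of_sum_sq_eq_zero [DecidableEq ι] {I : Finset ι} {p : ι → R[X]}
    (h : ∑ i ∈ I, p i ^ 2 = 0) {i : ι} (hi : i ∈ I) : p i = 0 := by
  have hD : (I.sup fun i => (p i).natDegree) = 0 := by
    simpa [h] using (natDegree_sum_pow_two_mul I p 1).symm
  have hcoeff := coeff_sum_pow_mul_sup I p 2
  rw [hD, h] at hcoeff
  have hdeg : (p i).natDegree = 0 :=
    Nat.le_zero.mp (hD ▸ le_sup (f := fun i => (p i).natDegree) hi)
  rw [eq_C_of_natDegree_eq_zero hdeg, IsFormallyReal.eq_zero_of_sum_sq_eq_zero hcoeff.symm hi, C_0]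

instance : IsFormallyReal R[X] :=
  IsFormallyReal.of_eq_zero_of_eq_zero_of_mul_self_add fun {s a} hs h => by
    obtain ⟨n, x, rfl⟩ := hs.exists_fin_sum_sq
    have hsum : ∑ i, (Fin.cons a x : Fin (n + 1) → R[X]) i ^ 2 = 0 := by
      simpa [Fin.sum_univ_succ, sq] using h
    simpa using eq_zero_of_sum_sq_eq_zero hsum (mem_univ 0)

end Polynomial

theorem pow_three_dvd_add_pow_sub {R : Type*} [CommRing R] (c d : R) :
    ∀ n : ℕ, d ^ 3 ∣ (c + d) ^ n - (c ^ n + n * c ^ (n - 1) * d + n.choose 2 * c ^ (n - 2) * d ^ 2)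
  | 0 => by simp
  | 1 => by simp
  | 2 => by norm_num [add_sq]
  | n + 3 => by
    have hexpand : (c + d) ^ (n + 3) - ((c ^ (n + 3) + ↑(n + 3) * c ^ (n + 3 - 1) * d +
        ↑((n + 3).choose 2) * c ^ (n + 3 - 2) * d ^ 2)) =
        ∑ i ∈ range (n + 1), d ^ (i + 3) * c ^ (n - i) * (n + 3).choose (i + 3) := by
      rw [add_comm c d, add_pow, sum_range_succ', sum_range_succ', sum_range_succ']
      simp only [zero_add, Nat.add_sub_add_right, Nat.choose_zero_right, Nat.choose_one_right]
      push_cast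
      ring
    rw [hexpand]
    exact dvd_sum fun i _ => ((pow_dvd_pow d (by omega)).mul_right _).mul_right _

theorem pow_three_dvd_sum_add_mul_pow_sub {A ι : Type*} [CommRing A] (I : Finset ι)
    (c u : ι → A) (t : A) (n : ℕ) :
    t ^ 3 ∣ ∑ i ∈ I, (c i + t * u i) ^ n - (∑ i ∈ I, c i ^ n +
      t * (n * ∑ i ∈ I, c i ^ (n - 1) * u i) +
      t ^ 2 * (n.choose 2 * ∑ i ∈ I, c i ^ (n - 2) * u i ^ 2)) := by
  have hsum : ∑ i ∈ I, (c i + t * u i) ^ n - (∑ i ∈ I, c i ^ n +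
      t * (n * ∑ i ∈ I, c i ^ (n - 1) * u i) +
      t ^ 2 * (n.choose 2 * ∑ i ∈ I, c i ^ (n - 2) * u i ^ 2)) =
      ∑ i ∈ I, ((c i + t * u i) ^ n - (c i ^ n + n * c i ^ (n - 1) * (t * u i) +
        n.choose 2 * c i ^ (n - 2) * (t * u i) ^ 2)) := by
    simp only [sum_sub_distrib, sum_add_distrib, mul_sum]
    congr 2
    · congr 1
      exact sum_congr rfl fun i _ => by ring
    · exact sum_congr rfl fun i _ => by ring
  rw [hsum]
  exact dvd_sum fun i _ =>
    (pow_dvd_pow_of_dvd (dvd_mul_right t (u i)) 3).trans (pow_three_dvd_add_pow_sub _ _ n)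

theorem exists_fin_sub_one_eq_sum_pow {A : Type*} [CommRing A] [IsDomain A] {k n : ℕ}
    (hn : n ≠ 0) {g t : A} (ht : t ≠ 0) {c u : Fin k → A} (hcu : ∀ i, c i = 0 ∨ u i = 0)
    (hc : ∑ i, c i ^ n = 1) (h : g * t ^ n + 1 = ∑ i, (c i + t * u i) ^ n) :
    ∃ f : Fin (k - 1) → A, g = ∑ i, f i ^ n := by
  have hpow (i : Fin k) : (c i + t * u i) ^ n = c i ^ n + t ^ n * u i ^ n := by
    rcases hcu i with h | h <;> simp [h, zero_pow hn, mul_pow]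
  have hg : g = ∑ i, u i ^ n := by
    refine mul_right_cancel₀ (pow_ne_zero n ht) ?_
    simp only [hpow, sum_add_distrib, hc, ← mul_sum] at h
    linear_combination h
  obtain ⟨i₀, hi₀⟩ : ∃ i, c i ≠ 0 := by
    by_contra! h0
    simp [h0, zero_pow hn] at hc
  obtain ⟨m, rfl⟩ := Nat.exists_eq_add_one_of_ne_zero (Fin.pos i₀).ne'
  refine ⟨fun j => u (i₀.succAbove j), ?_⟩
  rw [hg, Fin.sum_univ_succAbove _ i₀, (hcu i₀).resolve_left hi₀, zero_pow hn, zero_add]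
  rfl

namespace MvPolynomial

section General

variable {R : Type*} [CommRing R]

theorem isFormallyReal_fin [IsFormallyReal R] : ∀ n, IsFormallyReal (MvPolynomial (Fin n) R)
  | 0 => .of_injective (isEmptyAlgEquiv R (Fin 0)).toRingHom (isEmptyAlgEquiv R (Fin 0)).injective
  | n + 1 =>
    have := isFormallyReal_fin n
    .of_injective (finSuccEquiv R n).toRingHom (finSuccEquiv R n).injective

theorem degreeOf_zero_sum_pow_two_mul [IsFormallyReal R] {ι : Type*} {n : ℕ} (I : Finset ι)
    (p : ι → MvPolynomial (Fin (n + 1)) R) (s : ℕ) :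
    degreeOf 0 (∑ i ∈ I, p i ^ (2 * s)) = 2 * s * I.sup fun i => degreeOf 0 (p i) := by
  have := isFormallyReal_fin (R := R) n
  simp only [← natDegree_finSuccEquiv, map_sum, map_pow, Polynomial.natDegree_sum_pow_two_mul]

theorem degreeOf_eq_zero_of_sum_pow_eq_one [IsFormallyReal R] {ι : Type*} [Fintype ι] {n s : ℕ}
    {p : ι → MvPolynomial (Fin (n + 1)) R} (hs : 0 < s) (h : ∑ i, p i ^ (2 * s) = 1) (i : ι) :
    degreeOf 0 (p i) = 0 := by
  have hsup := degreeOf_zero_sum_pow_two_mul univ p s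
  rw [h, degreeOf_one, eq_comm, mul_eq_zero, or_iff_right (by omega)] at hsup
  simpa [hsup] using le_sup (f := fun i => degreeOf 0 (p i)) (mem_univ i)

theorem X_sub_dvd_sub_aeval_update {σ : Type*} [DecidableEq σ] (j : σ) (q p : MvPolynomial σ R) :
    X j - q ∣ p - aeval (Function.update X j q) p := by
  let mk := Ideal.Quotient.mkₐ R (Ideal.span {X j - q})
  have hmk : mk.comp (aeval (Function.update X j q)) = mk := by
    refine algHom_ext fun i => ?_
    rcases eq_or_ne i j with rfl | hij
    · simpa [mk, Ideal.Quotient.mk_eq_mk_iff_sub_mem, Ideal.mem_span_singleton] using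
        (dvd_neg.mpr dvd_rfl : X i - q ∣ -(X i - q))
    · simp [hij]
  rw [← Ideal.mem_span_singleton, ← Ideal.Quotient.mk_eq_mk_iff_sub_mem]
  exact (congr($hmk p)).symm

end General

variable {R ι : Type*} [CommRing R] [Fintype ι] {r s : ℕ} {g : MvPolynomial (Fin 2) R}
  {f : ι → MvPolynomial (Fin 2) R}

noncomputable def substY (r : ℕ) : MvPolynomial (Fin 2) R →ₐ[R] MvPolynomial (Fin 2) R :=
  aeval (Function.update X 1 (X 0 ^ r))

@[simp]
theorem substY_X_sub_X_pow : substY r (X 1 - X 0 ^ r : MvPolynomial (Fin 2) R) = 0 := by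
  simp [substY]

@[simp]
theorem substY_substY (p : MvPolynomial (Fin 2) R) : substY r (substY r p) = substY r p := by
  rw [← AlgHom.comp_apply]
  congr 1
  refine algHom_ext fun i => ?_
  fin_cases i <;> simp [substY]

theorem X_sub_X_pow_dvd_iff {p : MvPolynomial (Fin 2) R} :
    X 1 - X 0 ^ r ∣ p ↔ substY r p = 0 := by
  refine ⟨fun ⟨q, hq⟩ => by simp [hq], fun h => ?_⟩
  have hdvd : X 1 - X 0 ^ r ∣ p - substY r p := X_sub_dvd_sub_aeval_update 1 (X 0 ^ r) p
  rwa [h, sub_zero] at hdvd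

theorem sum_substY_pow_eq_one (hs : 0 < s)
    (hf : g * (X 1 - X 0 ^ r) ^ (2 * s) + 1 = ∑ i, f i ^ (2 * s)) :
    ∑ i, substY r (f i) ^ (2 * s) = 1 := by
  simpa [zero_pow (by omega : 2 * s ≠ 0)] using congr(substY r $hf).symm

section Domain

variable [IsDomain R]

theorem degreeOf_X_sub_X_pow (hr : 0 < r) :
    degreeOf 0 (X 1 - X 0 ^ r : MvPolynomial (Fin 2) R) = r := by
  rw [← natDegree_finSuccEquiv, map_sub, map_pow, finSuccEquiv_X_zero,
    show (1 : Fin 2) = Fin.succ 0 from rfl, finSuccEquiv_X_succ,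
    Polynomial.natDegree_sub_eq_right_of_natDegree_lt] <;> simp [hr]

theorem X_sub_X_pow_ne_zero (hr : 0 < r) : (X 1 - X 0 ^ r : MvPolynomial (Fin 2) R) ≠ 0 := by
  intro h
  have hdeg := degreeOf_X_sub_X_pow (R := R) hr
  simp [h] at hdeg
  omega

theorem degreeOf_X_sub_X_pow_mul (hr : 0 < r) {p : MvPolynomial (Fin 2) R} (hp : p ≠ 0) :
    degreeOf 0 ((X 1 - X 0 ^ r) * p) = r + degreeOf 0 p := by
  rw [degreeOf_mul_eq (X_sub_X_pow_ne_zero hr) hp, degreeOf_X_sub_X_pow hr]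

theorem eq_zero_of_X_sub_X_pow_dvd (hr : 0 < r) {p : MvPolynomial (Fin 2) R}
    (h : X 1 - X 0 ^ r ∣ p) (hdeg : degreeOf 0 p < r) : p = 0 := by
  obtain ⟨q, rfl⟩ := h
  by_contra hq
  rw [degreeOf_X_sub_X_pow_mul hr (right_ne_zero_of_mul hq)] at hdeg
  omega

variable [IsFormallyReal R]

theorem degreeOf_lt_of_sum_pow_eq (hr : 0 < r) (hdeg : degreeOf 0 g < 2 * s * r)
    (hf : g * (X 1 - X 0 ^ r) ^ (2 * s) + 1 = ∑ i, f i ^ (2 * s)) (i : ι) :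
    degreeOf 0 (f i) < 2 * r := by
  have hG : degreeOf 0 (g * (X 1 - X 0 ^ r) ^ (2 * s) + 1) ≤ degreeOf 0 g + 2 * s * r := by
    refine (degreeOf_add_le _ _ _).trans (max_le ((degreeOf_mul_le _ _ _).trans ?_) (by simp))
    grw [degreeOf_pow_le, degreeOf_X_sub_X_pow hr]
  rw [hf, degreeOf_zero_sum_pow_two_mul] at hG
  have hsup : 2 * s * (univ.sup fun i => degreeOf 0 (f i)) < 2 * s * (2 * r) := by
    nlinarith
  exact (le_sup (f := fun i => degreeOf 0 (f i)) (mem_univ i)).trans_lt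
    (Nat.lt_of_mul_lt_mul_left hsup)

theorem exists_eq_substY_add_mul (hr : 0 < r) (hs : 0 < s) (hdeg : degreeOf 0 g < 2 * s * r)
    (hf : g * (X 1 - X 0 ^ r) ^ (2 * s) + 1 = ∑ i, f i ^ (2 * s)) :
    ∃ u : ι → MvPolynomial (Fin 2) R,
      ∀ i, f i = substY r (f i) + (X 1 - X 0 ^ r) * u i ∧ degreeOf 0 (u i) < r := by
  have hc := degreeOf_eq_zero_of_sum_pow_eq_one hs (sum_substY_pow_eq_one hs hf)
  choose u hu using fun i =>
    X_sub_X_pow_dvd_iff.mpr (show substY r (f i - substY r (f i)) = 0 by simp)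
  refine ⟨u, fun i => ⟨by rw [← hu i]; ring, ?_⟩⟩
  by_cases hui : u i = 0
  · simp [hui, hr]
  have hmul := degreeOf_X_sub_X_pow_mul hr hui
  have hsub := degreeOf_sub_le 0 (f i) (substY r (f i))
  rw [← hu i] at hmul
  have hfi := degreeOf_lt_of_sum_pow_eq hr hdeg hf i
  simp only [hc i] at hsub
  omega

theorem eq_zero_or_eq_zero_of_sum_add_mul_pow [CharZero R] (hs : 1 < s) (hr : 0 < r)
    {c u : ι → MvPolynomial (Fin 2) R} (hc : ∑ i, c i ^ (2 * s) = 1)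
    (hcdeg : ∀ i, degreeOf 0 (c i) = 0) (hcfix : ∀ i, substY r (c i) = c i)
    (hudeg : ∀ i, degreeOf 0 (u i) < r)
    (h : g * (X 1 - X 0 ^ r) ^ (2 * s) + 1 = ∑ i, (c i + (X 1 - X 0 ^ r) * u i) ^ (2 * s))
    (i : ι) : c i = 0 ∨ u i = 0 := by
  classical
  have := isFormallyReal_fin (R := R) 2
  set t : MvPolynomial (Fin 2) R := X 1 - X 0 ^ r
  have ht : t ≠ 0 := X_sub_X_pow_ne_zero hr
  have hψt : substY r t = 0 := substY_X_sub_X_pow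
  obtain ⟨S3, hS3⟩ := pow_three_dvd_sum_add_mul_pow_sub univ c u t (2 * s)
  rw [← h, hc] at hS3
  set S1 := ∑ i, c i ^ (2 * s - 1) * u i
  set S2 := ∑ i, c i ^ (2 * s - 2) * u i ^ 2
  have hpow : t ^ (2 * s) = t ^ 2 * t ^ (2 * s - 2) := by rw [← pow_add]; congr 1; omega
  have h1 : ((2 * s : ℕ) : MvPolynomial (Fin 2) R) * S1 =
      t * (g * t ^ (2 * s - 2) - (2 * s).choose 2 * S2 - t * S3) :=
    mul_left_cancel₀ ht (by linear_combination -hS3 + g * hpow)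
  have hS1 : S1 = 0 := by
    refine eq_zero_of_X_sub_X_pow_dvd hr (X_sub_X_pow_dvd_iff.mpr ?_) ?_
    · simpa [hψt, map_ofNat, show s ≠ 0 by omega] using congr(substY r $h1)
    · refine (degreeOf_sum_le _ _ _).trans_lt ((Finset.sup_lt_iff hr).mpr fun i _ => ?_)
      grw [degreeOf_mul_le, degreeOf_pow_le, hcdeg i]
      simpa using hudeg i
  have h2 : ((2 * s).choose 2 : MvPolynomial (Fin 2) R) * S2 = g * t ^ (2 * s - 2) - t * S3 := by
    rw [hS1, mul_zero, eq_comm, mul_eq_zero, or_iff_right ht] at h1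
    linear_combination -h1
  have hsq : ∑ i, (c i ^ (s - 1) * substY r (u i)) ^ 2 = 0 := by
    have hS2 := congr(substY r $h2)
    simp only [S2, map_mul, map_sub, map_pow, map_natCast, map_sum, hcfix, hψt,
      zero_pow (show 2 * s - 2 ≠ 0 by omega), mul_zero, zero_mul, sub_zero, mul_eq_zero,
      Nat.cast_eq_zero, (Nat.choose_pos (by omega : 2 ≤ 2 * s)).ne', false_or] at hS2
    rw [← hS2]
    exact sum_congr rfl fun i _ => by rw [mul_pow, ← pow_mul]; congr 2; omega
  rcases mul_eq_zero.mp (IsFormallyReal.eq_zero_of_sum_sq_eq_zero hsq (mem_univ i)) with hci | hui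
  · exact .inl ((pow_eq_zero_iff (by omega)).mp hci)
  · exact .inr (eq_zero_of_X_sub_X_pow_dvd hr (X_sub_X_pow_dvd_iff.mpr hui) (hudeg i))

end Domain

end MvPolynomial

theorem length_of_G_general {K : Type*} [Field K]
    (hK : ∀ (n : ℕ) (a : Fin n → K), (∑ i, a i ^ 2) ≠ -1)
    (s : ℕ) (hs : 1 < s)
    (g : MvPolynomial (Fin 2) K) (k : ℕ)
    (hgk : ∃ f : Fin k → MvPolynomial (Fin 2) K, g = ∑ i, f i ^ (2 * s))
    (hgk' : ¬ ∃ f : Fin (k - 1) → MvPolynomial (Fin 2) K, g = ∑ i, f i ^ (2 * s))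
    (r : ℕ)
    (hdeg : g.degreeOf 0 < 2 * s * r) :
    (∃ f : Fin (k + 1) → MvPolynomial (Fin 2) K,
        g * (X 1 - X 0 ^ r) ^ (2 * s) + 1 = ∑ i, f i ^ (2 * s)) ∧
      ¬ ∃ f : Fin k → MvPolynomial (Fin 2) K,
        g * (X 1 - X 0 ^ r) ^ (2 * s) + 1 = ∑ i, f i ^ (2 * s) := by
  have : IsSemireal K := .of_not_isSumSq_neg_one fun h => by
    obtain ⟨n, a, ha⟩ := h.exists_fin_sum_sq
    exact hK n a ha.symm
  have := IsSemireal.isFormallyReal (K := K)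
  constructor
  · obtain ⟨f, rfl⟩ := hgk
    refine ⟨Fin.cons 1 fun i => f i * (X 1 - X 0 ^ r), ?_⟩
    simp [Fin.sum_univ_succ, mul_pow, sum_mul, add_comm]
  · rintro ⟨f, hf⟩
    have hr : 0 < r := Nat.pos_of_ne_zero fun hr => by simp [hr] at hdeg
    obtain ⟨u, hu⟩ := exists_eq_substY_add_mul hr (by omega) hdeg hf
    have hc := sum_substY_pow_eq_one (by omega) hf
    have hcu : g * (X 1 - X 0 ^ r) ^ (2 * s) + 1 =
        ∑ i, (substY r (f i) + (X 1 - X 0 ^ r) * u i) ^ (2 * s) :=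
      hf.trans (sum_congr rfl fun i _ => by rw [← (hu i).1])
    exact hgk' <| exists_fin_sub_one_eq_sum_pow (by omega) (X_sub_X_pow_ne_zero hr)
      (eq_zero_or_eq_zero_of_sum_add_mul_pow hs hr hc
        (degreeOf_eq_zero_of_sum_pow_eq_one (by omega) hc) (fun _ => substY_substY _)
        (fun i => (hu i).2) hcu) hc hcu

/-- Let `K` be a formally real field, `s > 1`, and `g ∈ K[x,y]` of `2s`-length `k`
(a sum of `k` `2s`-th powers but not of `k-1`). If `r > 0` and `deg_x g < 2sr`, then
`G = g·(y - x^r)^{2s} + 1` has `2s`-length exactly `k + 1`. -/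
theorem length_of_G {K : Type*} [Field K]
    (hK : ∀ (n : ℕ) (a : Fin n → K), (∑ i, a i ^ 2) ≠ -1)
    (s : ℕ) (hs : 1 < s)
    (g : MvPolynomial (Fin 2) K) (k : ℕ)
    (hgk : ∃ f : Fin k → MvPolynomial (Fin 2) K, g = ∑ i, f i ^ (2 * s))
    (hgk' : ¬ ∃ f : Fin (k - 1) → MvPolynomial (Fin 2) K, g = ∑ i, f i ^ (2 * s))
    (r : ℕ) (hr : 0 < r)
    (hdeg : g.degreeOf 0 < 2 * s * r) :
    (∃ f : Fin (k + 1) → MvPolynomial (Fin 2) K,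
        g * (X 1 - X 0 ^ r) ^ (2 * s) + 1 = ∑ i, f i ^ (2 * s)) ∧
      ¬ ∃ f : Fin k → MvPolynomial (Fin 2) K,
        g * (X 1 - X 0 ^ r) ^ (2 * s) + 1 = ∑ i, f i ^ (2 * s) :=
  length_of_G_general hK s hs g k hgk hgk' r hdeg
end

section
/- Let A be a commutative ring with identity in which −1 is not a sum of squares, and let n ≥ 2 and s ≥ 1 be integers. Then the 2s-th Pythagoras number of A[x_1,…,x_n] is infinite: for every positive integer ℓ there exists an element of A[x_1,…,x_n] which is a sum of finitely many 2s-th powers but which is not a sum of ℓ 2s-th powers of elements of A[x_1,…,x_n]. -/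
open MvPolynomial


def SOS {A : Type*} [CommRing A] (a : A) : Prop :=
  ∃ l : List A, a = (l.map (fun x => x ^ 2)).sum

namespace SOS

variable {A : Type*} [CommRing A]

lemma zero : SOS (0 : A) := ⟨[], rfl⟩

lemma sq (x : A) : SOS (x ^ 2) := ⟨[x], by simp⟩

lemma add {a b : A} (ha : SOS a) (hb : SOS b) : SOS (a + b) := by
  obtain ⟨l, rfl⟩ := ha; obtain ⟨m, rfl⟩ := hb
  exact ⟨l ++ m, by simp⟩

lemma sq_mul {a : A} (x : A) (ha : SOS a) : SOS (x ^ 2 * a) := by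
  obtain ⟨l, rfl⟩ := ha
  refine ⟨l.map (fun y => x * y), ?_⟩
  induction l with
  | nil => simp
  | cons y t ih => simp only [List.map_cons, List.sum_cons, mul_add, ih, mul_pow]

lemma mul {a b : A} (ha : SOS a) (hb : SOS b) : SOS (a * b) := by
  obtain ⟨l, rfl⟩ := ha
  induction l with
  | nil => simpa using zero
  | cons y t ih =>
    simp only [List.map_cons, List.sum_cons, add_mul]
    exact add (sq_mul y hb) ih

lemma natCast (n : ℕ) : SOS ((n : ℕ) : A) := by
  induction n with
  | zero => simpa using (zero : SOS (0:A))
  | succ m ih =>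
    have : ((m+1 : ℕ) : A) = (m : A) + 1 ^ 2 := by push_cast; ring
    rw [this]; exact add ih (sq 1)

lemma finsetSum {ι : Type*} (s : Finset ι) (f : ι → A) : SOS (∑ i ∈ s, f i ^ 2) := by
  classical
  induction s using Finset.induction with
  | empty => simpa using zero
  | insert _ _ h ih => rw [Finset.sum_insert h]; exact add (sq _) ih

lemma to_fin_sum {a : A} (ha : SOS a) : ∃ (m : ℕ) (c : Fin m → A), a = ∑ i, c i ^ 2 := by
  obtain ⟨l, rfl⟩ := ha
  refine ⟨l.length, l.get, ?_⟩
  conv_lhs => rw [← List.ofFn_get l]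
  rw [List.map_ofFn, List.sum_ofFn]
  rfl

end SOS

/-! ### From a semireal ring to a semireal field -/

section Construct

universe uA
variable (A : Type uA) [CommRing A]

def sosMonoid : Submonoid A where
  carrier := { a | ∃ t, SOS t ∧ a = 1 + t }
  one_mem' := ⟨0, SOS.zero, by ring⟩
  mul_mem' := by
    rintro a b ⟨t, ht, rfl⟩ ⟨u, hu, rfl⟩
    exact ⟨t + u + t * u, (ht.add hu).add (ht.mul hu), by ring⟩

theorem exists_semireal_field_hom (hA : ¬ SOS (-1 : A)) :
    ∃ (K : Type uA) (_ : Field K) (φ : A →+* K), ∀ x : K, SOS x → x ≠ -1 := by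
  classical
  set S := sosMonoid A with hS
  let B := Localization S
  have hS0 : (0 : A) ∉ (S : Set A) := by
    rintro ⟨t, ht, h0⟩
    exact hA (by rw [show (-1 : A) = t by linear_combination h0]; exact ht)
  haveI : Nontrivial B := by
    by_contra h
    rw [not_nontrivial_iff_subsingleton] at h
    have h1 : (algebraMap A B) 1 = 0 := Subsingleton.elim _ _
    rw [IsLocalization.map_eq_zero_iff S] at h1
    obtain ⟨m, hm⟩ := h1
    rw [mul_one] at hm
    exact hS0 (hm ▸ m.2)
  -- every 1 + sum of squares in B is a unit
  have key : ∀ (N : ℕ) (b : Fin N → B), IsUnit (1 + ∑ i, b i ^ 2) := by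
    intro N b
    obtain ⟨s, hs⟩ := IsLocalization.exist_integer_multiples S Finset.univ b
    choose a ha using fun i => hs i (Finset.mem_univ i)
    have hu : ∀ i, algebraMap A B (s : A) * b i = algebraMap A B (a i) := by
      intro i; rw [ha i, Algebra.smul_def]
    obtain ⟨t, ht, hst⟩ := s.2
    have hmem : ((s : A) ^ 2 + ∑ i, a i ^ 2) ∈ S := by
      refine ⟨2 * t + t * t + ∑ i, a i ^ 2, ?_, by rw [hst]; ring⟩
      refine SOS.add (SOS.add ?_ (ht.mul ht)) (SOS.finsetSum _ _)
      rw [two_mul]; exact ht.add ht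
    have hcalc : (algebraMap A B (s : A)) ^ 2 * (1 + ∑ i, b i ^ 2)
        = algebraMap A B ((s : A) ^ 2 + ∑ i, a i ^ 2) := by
      rw [map_add, map_pow, map_sum, mul_add, mul_one, Finset.mul_sum]
      congr 1
      refine Finset.sum_congr rfl fun i _ => ?_
      rw [← mul_pow, hu i, map_pow]
    have hunit : IsUnit (algebraMap A B ((s : A) ^ 2 + ∑ i, a i ^ 2)) :=
      IsLocalization.map_units B ⟨_, hmem⟩
    rw [← hcalc] at hunit
    obtain ⟨w, hw⟩ := hunit.exists_right_inv
    exact IsUnit.of_mul_eq_one ((algebraMap A B (s : A)) ^ 2 * w)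
      (by linear_combination hw)
  obtain ⟨𝔪, hm⟩ := Ideal.exists_maximal B
  haveI := hm
  refine ⟨B ⧸ 𝔪, Ideal.Quotient.field 𝔪, (Ideal.Quotient.mk 𝔪).comp (algebraMap A B), ?_⟩
  rintro x ⟨l, hl⟩ rfl
  -- lift the list to B
  have hlift : ∀ y : B ⧸ 𝔪, ∃ b : B, Ideal.Quotient.mk 𝔪 b = y := Ideal.Quotient.mk_surjective
  choose g hg using hlift
  have hgen : ∀ m : List (B ⧸ 𝔪), Ideal.Quotient.mk 𝔪 (((m.map g).map (fun x => x ^ 2)).sum)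
      = (m.map (fun x => x ^ 2)).sum := by
    intro m
    induction m with
    | nil => simp
    | cons y t ih => simp only [List.map_cons, List.sum_cons, map_add, map_pow, hg, ih]
  set l' := l.map g with hl'
  have hsum : Ideal.Quotient.mk 𝔪 (1 + (l'.map (fun x => x ^ 2)).sum) = 0 := by
    rw [map_add, map_one, hl', hgen, ← hl]
    ring
  rw [Ideal.Quotient.eq_zero_iff_mem] at hsum
  have hfin : 1 + (l'.map (fun x => x ^ 2)).sum = 1 + ∑ i : Fin l'.length, l'.get i ^ 2 := by
    congr 1
    conv_lhs => rw [← List.ofFn_get l']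
    rw [List.map_ofFn, List.sum_ofFn]
    rfl
  rw [hfin] at hsum
  exact hm.ne_top (Ideal.eq_top_of_isUnit_mem 𝔪 hsum (key _ _))

end Construct

/-! ### Consequences in a semireal field -/

section FieldFacts

variable {K : Type*} [Field K] (hsr : ∀ x : K, SOS x → x ≠ -1)

include hsr in
theorem FR_scalar {N s : ℕ} (hs : 1 ≤ s) (c : Fin N → K)
    (h : ∑ i, c i ^ (2 * s) = 0) : ∀ i, c i = 0 := by
  intro k
  by_contra hk
  have hpow : ∀ x : K, x ^ (2 * s) = (x ^ s) ^ 2 := by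
    intro x; rw [← pow_mul, mul_comm]
  have hks : c k ^ s ≠ 0 := pow_ne_zero _ hk
  have hinv : ((c k ^ s)⁻¹) ^ 2 * (c k ^ (2*s)) = 1 := by
    rw [hpow, ← mul_pow, inv_mul_cancel₀ hks, one_pow]
  have hsum : ∑ i ∈ Finset.univ.erase k, (c i ^ s * (c k ^ s)⁻¹) ^ 2 = -1 := by
    have h2 : ∑ i ∈ Finset.univ.erase k, c i ^ (2*s) = - c k ^ (2*s) := by
      have := Finset.sum_erase_add Finset.univ (fun i => c i ^ (2*s)) (Finset.mem_univ k)
      linear_combination this.trans h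
    calc ∑ i ∈ Finset.univ.erase k, (c i ^ s * (c k ^ s)⁻¹) ^ 2
        = (∑ i ∈ Finset.univ.erase k, c i ^ (2*s)) * ((c k ^ s)⁻¹)^2 := by
          rw [Finset.sum_mul]
          exact Finset.sum_congr rfl fun i _ => by rw [mul_pow, hpow]
      _ = -1 := by rw [h2]; linear_combination -hinv
  exact hsr _ (SOS.finsetSum _ _) hsum

include hsr in
theorem semireal_charZero : CharZero K := by
  constructor
  have key : ∀ n : ℕ, ((n : ℕ) : K) = 0 → n = 0 := by
    intro n hn
    rcases n with _ | m
    · rfl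
    · exfalso
      refine hsr ((m:ℕ) : K) (SOS.natCast m) ?_
      have h1 : ((m : ℕ) : K) + 1 = 0 := by push_cast at hn; linear_combination hn
      linear_combination h1
  intro a b hab
  rcases le_total a b with hle | hle
  · have : ((b - a : ℕ) : K) = 0 := by
      push_cast [Nat.cast_sub hle]
      rw [← hab]; ring
    have := key _ this; omega
  · have : ((a - b : ℕ) : K) = 0 := by
      push_cast [Nat.cast_sub hle]
      rw [hab]; ring
    have := key _ this; omega

include hsr in
theorem FR_polyT {N s : ℕ} (hs : 1 ≤ s) (u : Fin N → Polynomial K)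
    (h : ∑ i, u i ^ (2 * s) = 0) : ∀ i, u i = 0 := by
  haveI := semireal_charZero hsr
  intro i
  apply Polynomial.zero_of_eval_zero
  intro x
  have hx : ∑ j, (Polynomial.eval x (u j)) ^ (2*s) = 0 := by
    have := congrArg (Polynomial.eval x) h
    simpa [Polynomial.eval_finset_sum] using this
  exact FR_scalar hsr hs _ hx i

end FieldFacts

/-! ### Bivariate polynomials: K[x][y], homogenization map, triangular degree -/

section Bivar

variable {K : Type*} [Field K]

open Polynomial

/-- The homogenization-transport map `K[x][y] → K[T][W]`, sending `x ↦ W`, `y ↦ T•W`,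
    so that the coefficient of `W^d` is the "antidiagonal-d slice" as a polynomial in `T`
    recording the `y`-degree. (Both source and target are `Polynomial (Polynomial K)`.) -/
noncomputable def EE : Polynomial (Polynomial K) →+* Polynomial (Polynomial K) :=
  Polynomial.eval₂RingHom (Polynomial.mapRingHom Polynomial.C)
    (Polynomial.C Polynomial.X * Polynomial.X)

theorem EE_coeffcoeff (p : Polynomial (Polynomial K)) (m k : ℕ) :
    ((EE p).coeff m).coeff k = if k ≤ m then (p.coeff k).coeff (m - k) else 0 := by
  induction p using Polynomial.induction_on' with
  | add f g hf hg =>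
    simp only [map_add, Polynomial.coeff_add, hf, hg]
    split_ifs <;> simp
  | monomial n a =>
    have hEE : EE (Polynomial.monomial n a)
        = Polynomial.C ((Polynomial.X : Polynomial K) ^ n) *
          ((Polynomial.map (Polynomial.C) a) * Polynomial.X ^ n) := by
      rw [EE, Polynomial.coe_eval₂RingHom, Polynomial.eval₂_monomial]
      rw [mul_pow, ← Polynomial.C_pow]
      simp only [Polynomial.coe_mapRingHom]
      ring
    rw [hEE, Polynomial.coeff_C_mul, Polynomial.coeff_mul_X_pow']
    by_cases hnm : n ≤ m
    · rw [if_pos hnm, Polynomial.coeff_map, mul_comm ((Polynomial.X : Polynomial K) ^ n),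
        Polynomial.C_mul_X_pow_eq_monomial, Polynomial.coeff_monomial, Polynomial.coeff_monomial]
      by_cases hnk : n = k
      · subst hnk
        rw [if_pos rfl, if_pos rfl, if_pos hnm]
      · rw [if_neg hnk, if_neg hnk]
        split_ifs <;> simp
    · rw [if_neg hnm, mul_zero, Polynomial.coeff_zero, Polynomial.coeff_monomial]
      by_cases hkm : k ≤ m
      · have hne : n ≠ k := by omega
        rw [if_pos hkm, if_neg hne, Polynomial.coeff_zero]
      · rw [if_neg hkm]

theorem EE_eq_zero_iff (p : Polynomial (Polynomial K)) : EE p = 0 ↔ p = 0 := by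
  constructor
  · intro h
    ext k j
    have := EE_coeffcoeff p (k + j) k
    rw [h] at this
    simpa using this.symm
  · rintro rfl; exact map_zero _

def TDle (p : Polynomial (Polynomial K)) (d : ℕ) : Prop := (EE p).natDegree ≤ d

theorem TDle_iff (p : Polynomial (Polynomial K)) (d : ℕ) :
    TDle p d ↔ ∀ k j, d < k + j → (p.coeff k).coeff j = 0 := by
  constructor
  · intro h k j hkj
    have h0 : (EE p).coeff (k + j) = 0 :=
      Polynomial.coeff_eq_zero_of_natDegree_lt (lt_of_le_of_lt h hkj)
    have := EE_coeffcoeff p (k + j) k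
    rw [h0] at this
    simpa using this.symm
  · intro h
    rw [TDle, Polynomial.natDegree_le_iff_coeff_eq_zero]
    intro m hm
    ext k
    rw [EE_coeffcoeff]
    split_ifs with hkm
    · exact h k (m - k) (by omega)
    · simp
theorem TDle_mono {p : Polynomial (Polynomial K)} {d e : ℕ} (h : TDle p d) (hde : d ≤ e) :
    TDle p e := le_trans h hde

theorem TDle_zero (d : ℕ) : TDle (0 : Polynomial (Polynomial K)) d := by
  rw [TDle, map_zero]; simp

theorem TDle_add {p q : Polynomial (Polynomial K)} {d : ℕ} (hp : TDle p d) (hq : TDle q d) :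
    TDle (p + q) d := by
  rw [TDle, map_add]
  exact le_trans (Polynomial.natDegree_add_le _ _) (max_le hp hq)

theorem TDle_sub {p q : Polynomial (Polynomial K)} {d : ℕ} (hp : TDle p d) (hq : TDle q d) :
    TDle (p - q) d := by
  rw [TDle, map_sub]
  exact le_trans (Polynomial.natDegree_sub_le _ _) (max_le hp hq)

theorem TDle_mul {p q : Polynomial (Polynomial K)} {d e : ℕ} (hp : TDle p d) (hq : TDle q e) :
    TDle (p * q) (d + e) := by
  rw [TDle, map_mul]
  exact le_trans (Polynomial.natDegree_mul_le) (add_le_add hp hq)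

theorem TDle_pow {p : Polynomial (Polynomial K)} {d : ℕ} (hp : TDle p d) (n : ℕ) :
    TDle (p ^ n) (n * d) := by
  induction n with
  | zero => rw [pow_zero, TDle, map_one]; simp
  | succ m ih =>
    rw [pow_succ, Nat.succ_mul]
    exact TDle_mul ih hp

theorem TDle_sum {ι : Type*} (t : Finset ι) (f : ι → Polynomial (Polynomial K)) (d : ℕ)
    (h : ∀ i ∈ t, TDle (f i) d) : TDle (∑ i ∈ t, f i) d := by
  rw [TDle, map_sum]
  exact Polynomial.natDegree_sum_le_of_forall_le _ _ h

noncomputable def topf (d : ℕ) (p : Polynomial (Polynomial K)) : Polynomial K := (EE p).coeff d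

theorem topf_add (d : ℕ) (p q : Polynomial (Polynomial K)) :
    topf d (p + q) = topf d p + topf d q := by
  rw [topf, topf, topf, map_add, Polynomial.coeff_add]

theorem topf_sum {ι : Type*} (d : ℕ) (t : Finset ι) (f : ι → Polynomial (Polynomial K)) :
    topf d (∑ i ∈ t, f i) = ∑ i ∈ t, topf d (f i) := by
  rw [topf, map_sum, Polynomial.finset_sum_coeff]
  rfl

theorem topf_mul {p q : Polynomial (Polynomial K)} {d e : ℕ} (hp : TDle p d) (hq : TDle q e) :
    topf (d + e) (p * q) = topf d p * topf e q := by
  rw [topf, topf, topf, map_mul]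
  exact Polynomial.coeff_mul_add_eq_of_natDegree_le hp hq

theorem topf_pow {p : Polynomial (Polynomial K)} {d : ℕ} (hp : TDle p d) (n : ℕ) :
    topf (n * d) (p ^ n) = (topf d p) ^ n := by
  induction n with
  | zero => simp [topf, Polynomial.coeff_one]
  | succ m ih =>
    rw [pow_succ, pow_succ, Nat.succ_mul, ← ih]
    exact topf_mul (TDle_pow hp m) hp

theorem topf_eq_zero_of_lt {p : Polynomial (Polynomial K)} {e m : ℕ} (hp : TDle p e)
    (hem : e < m) : topf m p = 0 :=
  Polynomial.coeff_eq_zero_of_natDegree_lt (lt_of_le_of_lt hp hem)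

noncomputable def TDdeg (p : Polynomial (Polynomial K)) : ℕ := (EE p).natDegree

theorem TDle_TDdeg (p : Polynomial (Polynomial K)) : TDle p (TDdeg p) := le_refl _

theorem topf_TDdeg_ne_zero {p : Polynomial (Polynomial K)} (hp : p ≠ 0) :
    topf (TDdeg p) p ≠ 0 := by
  rw [topf, TDdeg, ← Polynomial.leadingCoeff]
  rw [Polynomial.leadingCoeff_ne_zero]
  rw [Ne, EE_eq_zero_iff]
  exact hp

theorem TDdeg_le_of_TDle {p : Polynomial (Polynomial K)} {d : ℕ} (h : TDle p d) : TDdeg p ≤ d := h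

end Bivar
/-! ### evaluation, staircase polynomials, and the span-forcing induction -/

section Stair

variable {K : Type*} [Field K]

open Polynomial

noncomputable def evalXY (u v : K) : Polynomial (Polynomial K) →+* K :=
  (Polynomial.evalRingHom u).comp (Polynomial.evalRingHom (Polynomial.C v))

theorem evalXY_apply (u v : K) (p : Polynomial (Polynomial K)) :
    evalXY u v p = (p.eval (Polynomial.C v)).eval u := rfl

theorem FR_PP (hsr : ∀ x : K, SOS x → x ≠ -1) {N s : ℕ} (hs : 1 ≤ s)
    (p : Fin N → Polynomial (Polynomial K)) (h : ∑ i, p i ^ (2 * s) = 0) : ∀ i, p i = 0 := by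
  haveI := semireal_charZero hsr
  intro i
  have hmap : ∀ a : K, Polynomial.map (Polynomial.evalRingHom a) (p i) = 0 := by
    intro a
    have h2 : ∑ j, (Polynomial.map (Polynomial.evalRingHom a) (p j)) ^ (2 * s) = 0 := by
      have := congrArg (Polynomial.mapRingHom (Polynomial.evalRingHom a)) h
      simpa [map_sum, map_pow] using this
    exact FR_polyT hsr hs _ h2 i
  ext k j
  have : ∀ a : K, ((p i).coeff k).eval a = 0 := by
    intro a
    have := congrArg (fun q => Polynomial.coeff q k) (hmap a)
    simpa [Polynomial.coeff_map] using this
  have hz : ((p i).coeff k) = 0 := Polynomial.zero_of_eval_zero _ this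
  simp [hz]

theorem deg_force (hsr : ∀ x : K, SOS x → x ≠ -1) {s ℓ D : ℕ} (hs : 1 ≤ s) (hl : 1 ≤ ℓ)
    (g : Fin ℓ → Polynomial (Polynomial K)) {F : Polynomial (Polynomial K)}
    (hF : ∑ j, g j ^ (2 * s) = F) (hFD : TDle F (2 * s * D)) : ∀ j, TDle (g j) D := by
  haveI : Nonempty (Fin ℓ) := ⟨⟨0, hl⟩⟩
  by_contra hcon
  push_neg at hcon
  obtain ⟨j₀, hj₀⟩ := hcon
  set d := Finset.univ.sup (fun j => TDdeg (g j)) with hd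
  obtain ⟨jm, _, hjm⟩ := Finset.exists_mem_eq_sup Finset.univ Finset.univ_nonempty
    (fun j => TDdeg (g j))
  have hDd : D < d := by
    have h1 : TDdeg (g j₀) ≤ d := Finset.le_sup (f := fun j => TDdeg (g j)) (Finset.mem_univ j₀)
    have h2 : ¬ TDdeg (g j₀) ≤ D := hj₀
    omega
  have hgm : g jm ≠ 0 := by
    intro h0
    rw [h0] at hjm
    have : TDdeg (0 : Polynomial (Polynomial K)) = 0 := by
      rw [TDdeg, map_zero, Polynomial.natDegree_zero]
    omega
  have htop : ∑ j, (topf d (g j)) ^ (2 * s) = 0 := by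
    have h1 : topf (2 * s * d) F = 0 :=
      topf_eq_zero_of_lt hFD (by have := hs; nlinarith)
    rw [← hF, topf_sum] at h1
    rw [← h1]
    refine Finset.sum_congr rfl fun j _ => ?_
    exact (topf_pow (le_trans (TDle_TDdeg (g j)) (Finset.le_sup (f := fun j => TDdeg (g j)) (Finset.mem_univ j))) (2*s)).symm
  have := FR_polyT hsr hs _ htop jm
  exact topf_TDdeg_ne_zero hgm (by rw [← hjm]; exact this)

noncomputable def Px (a : ℕ) : Polynomial K :=
  ∏ i ∈ Finset.range a, (Polynomial.X - Polynomial.C (i : K))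

noncomputable def Qy (r b : ℕ) : Polynomial (Polynomial K) :=
  ∏ j ∈ Finset.range b, (Polynomial.X - Polynomial.C (Polynomial.C ((r + j : ℕ) : K)))

theorem Px_monic (a : ℕ) : (Px (K := K) a).Monic :=
  Polynomial.monic_prod_of_monic _ _ (fun i _ => Polynomial.monic_X_sub_C _)

theorem Px_natDegree (a : ℕ) : (Px (K := K) a).natDegree = a := by
  rw [Px, Polynomial.natDegree_prod_of_monic _ _ (fun i _ => Polynomial.monic_X_sub_C _)]
  rw [Finset.sum_congr rfl (fun i _ => Polynomial.natDegree_X_sub_C ((i : ℕ) : K))]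
  simp

theorem Px_eval_lt [CharZero K] {i a : ℕ} (h : i < a) : (Px (K := K) a).eval (i : K) = 0 := by
  rw [Px, Polynomial.eval_prod]
  refine Finset.prod_eq_zero (Finset.mem_range.mpr h) ?_
  simp

theorem Px_eval_self_ne [CharZero K] (a : ℕ) : (Px (K := K) a).eval (a : K) ≠ 0 := by
  rw [Px, Polynomial.eval_prod]
  refine Finset.prod_ne_zero_iff.mpr fun i hi => ?_
  simp only [Polynomial.eval_sub, Polynomial.eval_X, Polynomial.eval_C, sub_ne_zero]
  exact fun hc => by
    have := Nat.cast_injective (R := K) hc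
    simp only [Finset.mem_range] at hi
    omega

theorem U1 [CharZero K] (u : Polynomial K) (d : ℕ) (hdeg : u.natDegree ≤ d)
    (hroots : ∀ i : ℕ, i < d → u.eval (i : K) = 0) :
    u = Polynomial.C (u.coeff d) * Px d := by
  set v := u - Polynomial.C (u.coeff d) * Px d with hv
  have hvd : v.natDegree ≤ d := by
    refine le_trans (Polynomial.natDegree_sub_le _ _) (max_le hdeg ?_)
    refine le_trans (Polynomial.natDegree_mul_le) ?_
    simp [Px_natDegree]
  have hvcoeff : v.coeff d = 0 := by
    rw [hv, Polynomial.coeff_sub, Polynomial.coeff_C_mul]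
    have : (Px (K := K) d).coeff d = 1 := by
      have := (Px_monic (K := K) d).coeff_natDegree
      rwa [Px_natDegree] at this
    rw [this, mul_one, sub_self]
  have hvroots : ∀ i : ℕ, i < d → v.eval (i : K) = 0 := by
    intro i hi
    rw [hv]
    simp [hroots i hi, Px_eval_lt hi]
  have hvdlt : v.natDegree < d ∨ v = 0 := by
    by_cases h0 : v = 0
    · exact Or.inr h0
    · left
      rcases Nat.lt_or_ge v.natDegree d with h | h
      · exact h
      · exfalso
        have : v.natDegree = d := le_antisymm hvd h
        exact (Polynomial.leadingCoeff_ne_zero.mpr h0) (by rw [Polynomial.leadingCoeff, this, hvcoeff])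
  have hv0 : v = 0 := by
    rcases hvdlt with h | h
    · refine Polynomial.eq_zero_of_natDegree_lt_card_of_eval_eq_zero v
        (f := fun i : Fin d => (i : K)) ?_ ?_ ?_
      · intro i j hij
        have := Nat.cast_injective (R := K) hij
        exact Fin.ext this
      · intro i; exact hvroots i i.2
      · simpa using h
    · exact h
  have := sub_eq_zero.mp (hv ▸ hv0)
  linear_combination this
end Stair

section StairMain

variable {K : Type*} [Field K]

open Polynomial

theorem TDle_coeff_natDegree_le {p : Polynomial (Polynomial K)} {d k : ℕ} (h : TDle p d) :
    (p.coeff k).natDegree ≤ d := by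
  rw [Polynomial.natDegree_le_iff_coeff_eq_zero]
  intro j hj
  exact (TDle_iff p d).mp h k j (by omega)

theorem TDle_C {w : Polynomial K} {d : ℕ} (h : w.natDegree ≤ d) :
    TDle (Polynomial.C w) d := by
  rw [TDle_iff]
  intro k j hkj
  by_cases hk : k = 0
  · subst hk
    rw [Polynomial.coeff_C_zero]
    exact Polynomial.coeff_eq_zero_of_natDegree_lt (by omega)
  · rw [Polynomial.coeff_C, if_neg hk]
    simp

theorem TDle_X : TDle (Polynomial.X : Polynomial (Polynomial K)) 1 := by
  rw [TDle_iff]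
  intro k j hkj
  rw [Polynomial.coeff_X]
  by_cases hk : 1 = k
  · rw [if_pos hk]
    have hj : j ≠ 0 := by omega
    simp [Polynomial.coeff_one, hj]
  · rw [if_neg hk]; simp

theorem TDle_X_sub_CC (v : K) : TDle (Polynomial.X - Polynomial.C (Polynomial.C v)) 1 :=
  TDle_sub TDle_X (TDle_mono (TDle_C (d := 0) (by simp)) (by omega))

theorem TDle_Qy (r b : ℕ) : TDle (Qy (K := K) r b) b := by
  induction b with
  | zero =>
    rw [Qy]
    simp only [Finset.range_zero, Finset.prod_empty]
    have h1 : (1 : Polynomial (Polynomial K)) = Polynomial.C (1 : Polynomial K) := by simp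
    rw [h1]
    exact TDle_C (d := 0) (by simp)
  | succ b ih =>
    rw [Qy, Finset.prod_range_succ]
    exact TDle_mul (ih) (TDle_X_sub_CC _)

theorem TDle_gen {a b : ℕ} : TDle (Polynomial.C (Px (K := K) a) * Qy r b) (a + b) :=
  TDle_mul (TDle_C (by rw [Px_natDegree])) (TDle_Qy r b)

theorem Qy_peel (r b : ℕ) :
    Qy (K := K) r (b + 1) = (Polynomial.X - Polynomial.C (Polynomial.C (r : K))) * Qy (r+1) b := by
  rw [Qy, Finset.prod_range_succ']
  have h1 : (Polynomial.X - Polynomial.C (Polynomial.C ((r + 0 : ℕ) : K)))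
      = (Polynomial.X - Polynomial.C (Polynomial.C ((r : ℕ) : K))) := by norm_num
  rw [h1, mul_comm]
  congr 1
  rw [Qy]
  refine Finset.prod_congr rfl fun j _ => ?_
  have h2 : r + (j + 1) = (r + 1) + j := by omega
  rw [h2]

theorem evalXY_C (u v : K) (w : Polynomial K) :
    evalXY u v (Polynomial.C w) = w.eval u := by
  rw [evalXY_apply, Polynomial.eval_C]

theorem evalXY_X (u v : K) :
    evalXY u v (Polynomial.X : Polynomial (Polynomial K)) = v := by
  rw [evalXY_apply, Polynomial.eval_X, Polynomial.eval_C]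

theorem natDegree_evalC_le {p : Polynomial (Polynomial K)} {d : ℕ} (h : TDle p d) (v : K) :
    (p.eval (Polynomial.C v)).natDegree ≤ d := by
  rw [Polynomial.eval_eq_sum_range]
  apply Polynomial.natDegree_sum_le_of_forall_le
  intro i _
  refine le_trans Polynomial.natDegree_mul_le ?_
  have h1 : (p.coeff i).natDegree ≤ d := TDle_coeff_natDegree_le h
  have h2 : ((Polynomial.C v : Polynomial K) ^ i).natDegree = 0 := by
    rw [← Polynomial.C_pow, Polynomial.natDegree_C]
  omega

theorem TDle_zero_struct {p : Polynomial (Polynomial K)} (h : TDle p 0) :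
    p = Polynomial.C (Polynomial.C ((p.coeff 0).coeff 0)) := by
  ext k j
  rw [TDle_iff] at h
  by_cases hk : k = 0
  · subst hk
    by_cases hj : j = 0
    · subst hj; rw [Polynomial.coeff_C_zero, Polynomial.coeff_C_zero]
    · rw [h 0 j (by omega), Polynomial.coeff_C_zero, Polynomial.coeff_C, if_neg hj]
  · rw [h k j (by omega), Polynomial.coeff_C, if_neg hk]
    simp

theorem stair_span [CharZero K] :
    ∀ (D' r : ℕ) (Cs : Finset ℕ), (∀ a ∈ Cs, a ≤ D') → ∀ p : Polynomial (Polynomial K),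
    TDle p D' →
    (∀ i j : ℕ, i + j ≤ D' → ¬(i ∈ Cs ∧ i + j = D') → evalXY (i : K) ((r + j : ℕ) : K) p = 0) →
    p ∈ Submodule.span K ((fun a => Polynomial.C (Px (K := K) a) * Qy r (D' - a)) '' ↑Cs) := by
  intro D'
  induction D' with
  | zero =>
    intro r Cs _ p hdeg hvan
    have hp := TDle_zero_struct hdeg
    by_cases h0 : 0 ∈ Cs
    · rw [hp]
      have hgen : (fun a => Polynomial.C (Px (K := K) a) * Qy r (0 - a)) 0
          ∈ ((fun a => Polynomial.C (Px (K := K) a) * Qy r (0 - a)) '' ↑Cs) :=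
        Set.mem_image_of_mem _ (by exact_mod_cast h0)
      have hone : (fun a => Polynomial.C (Px (K := K) a) * Qy r (0 - a)) 0 = 1 := by
        simp [Px, Qy]
      have hmem := Submodule.smul_mem (Submodule.span K ((fun a => Polynomial.C (Px (K := K) a) * Qy r (0 - a)) '' ↑Cs))
        ((p.coeff 0).coeff 0) (Submodule.subset_span hgen)
      rw [hone] at hmem
      have halg : Polynomial.C (Polynomial.C ((p.coeff 0).coeff 0))
          = ((p.coeff 0).coeff 0 : K) • (1 : Polynomial (Polynomial K)) := by
        rw [Algebra.smul_def, mul_one]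
        rfl
      rw [halg]
      exact hmem
    · have hv := hvan 0 0 (by omega) (by rintro ⟨h1, _⟩; exact h0 h1)
      rw [hp]
      have : (p.coeff 0).coeff 0 = 0 := by
        rw [hp] at hv
        rw [evalXY_C, Polynomial.eval_C] at hv
        exact hv
      rw [this]
      simp
  | succ D ih =>
    intro r Cs hCs p hdeg hvan
    set P0 := p.eval (Polynomial.C ((r : ℕ) : K)) with hP0def
    set c := P0.coeff (D + 1) with hcdef
    have hrow : ∀ i : ℕ, i < D + 1 → P0.eval (i : K) = 0 := by
      intro i hi
      have := hvan i 0 (by omega) (by rintro ⟨_, h⟩; omega)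
      rw [evalXY_apply] at this
      simpa [hP0def] using this
    have hP0 : P0 = Polynomial.C c * Px (D + 1) :=
      U1 P0 (D + 1) (natDegree_evalC_le hdeg _) hrow
    have hc0 : (D + 1) ∉ Cs → c = 0 := by
      intro hB
      have hv := hvan (D + 1) 0 (by omega) (by rintro ⟨h1, _⟩; exact hB h1)
      rw [evalXY_apply] at hv
      simp only [Nat.add_zero] at hv
      rw [← hP0def] at hv
      rw [hP0] at hv
      rw [Polynomial.eval_mul, Polynomial.eval_C] at hv
      rcases mul_eq_zero.mp hv with h | h
      · exact h
      · exact absurd h (Px_eval_self_ne (D + 1))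
    set w : Polynomial K := Polynomial.C c * Px (D + 1) with hwdef
    set p₁ := p - Polynomial.C w with hp₁def
    have hCw_mem : Polynomial.C w ∈ Submodule.span K
        ((fun a => Polynomial.C (Px (K := K) a) * Qy r (D + 1 - a)) '' ↑Cs) := by
      by_cases hB : (D + 1) ∈ Cs
      · have hgen : (fun a => Polynomial.C (Px (K := K) a) * Qy r (D + 1 - a)) (D + 1)
            ∈ ((fun a => Polynomial.C (Px (K := K) a) * Qy r (D + 1 - a)) '' ↑Cs) :=
          Set.mem_image_of_mem _ (by exact_mod_cast hB)
        have hone : (fun a => Polynomial.C (Px (K := K) a) * Qy r (D + 1 - a)) (D + 1)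
            = Polynomial.C (Px (K := K) (D + 1)) := by
          simp [Qy]
        have hsm := Submodule.smul_mem (Submodule.span K
            ((fun a => Polynomial.C (Px (K := K) a) * Qy r (D + 1 - a)) '' ↑Cs))
          c (Submodule.subset_span hgen)
        rw [hone] at hsm
        have : Polynomial.C w = c • Polynomial.C (Px (K := K) (D + 1)) := by
          rw [hwdef, Algebra.smul_def]
          have : (algebraMap K (Polynomial (Polynomial K))) c = Polynomial.C (Polynomial.C c) := rfl
          rw [this, ← Polynomial.C_mul]
        rw [this]
        exact hsm
      · rw [hwdef, hc0 hB]
        simp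
    have hrow1 : p₁.eval (Polynomial.C ((r : ℕ) : K)) = 0 := by
      rw [hp₁def, Polynomial.eval_sub, Polynomial.eval_C, ← hP0def, hP0, hwdef, sub_self]
    have hdvd : (Polynomial.X - Polynomial.C (Polynomial.C ((r : ℕ) : K))) ∣ p₁ :=
      Polynomial.dvd_iff_isRoot.mpr hrow1
    obtain ⟨p₂, hp₂⟩ := hdvd
    by_cases hp₂0 : p₂ = 0
    · have : p₁ = 0 := by rw [hp₂, hp₂0, mul_zero]
      have hp : p = Polynomial.C w := by
        have := sub_eq_zero.mp (hp₁def ▸ this)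
        linear_combination this
      rw [hp]
      exact hCw_mem
    -- p₂ ≠ 0 : recurse
    have hTDw : TDle (Polynomial.C w) (D + 1) := by
      refine TDle_C ?_
      rw [hwdef]
      refine le_trans Polynomial.natDegree_mul_le ?_
      simp [Px_natDegree]
    have hTD1 : TDle p₁ (D + 1) := TDle_sub hdeg hTDw
    have hfac_ne : (Polynomial.X - Polynomial.C (Polynomial.C ((r : ℕ) : K)) :
        Polynomial (Polynomial K)) ≠ 0 := by
      intro h
      have := congrArg (fun q => Polynomial.coeff q 1) h
      simp [Polynomial.coeff_X_one] at this
    have hEEfac : (EE (Polynomial.X - Polynomial.C (Polynomial.C ((r : ℕ) : K)) :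
        Polynomial (Polynomial K))).natDegree = 1 := by
      have h1 : EE (Polynomial.X : Polynomial (Polynomial K))
          = Polynomial.C Polynomial.X * Polynomial.X := by
        rw [EE, Polynomial.coe_eval₂RingHom, Polynomial.eval₂_X]
      have h2 : EE (Polynomial.C (Polynomial.C ((r : ℕ) : K)) : Polynomial (Polynomial K))
          = Polynomial.C (Polynomial.C ((r : ℕ) : K)) := by
        rw [EE, Polynomial.coe_eval₂RingHom, Polynomial.eval₂_C]
        simp
      rw [map_sub, h1, h2]
      rw [Polynomial.natDegree_sub_eq_left_of_natDegree_lt]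
      · exact Polynomial.natDegree_C_mul_X _ (by simp)
      · rw [Polynomial.natDegree_C, Polynomial.natDegree_C_mul_X _ (by simp)]
        omega
    have hTD2 : TDle p₂ D := by
      have hEE1 : (EE p₁).natDegree = 1 + (EE p₂).natDegree := by
        rw [hp₂, map_mul, Polynomial.natDegree_mul ?h1 ?h2, hEEfac]
        case h1 =>
          rw [Ne, EE_eq_zero_iff]; exact hfac_ne
        case h2 =>
          rw [Ne, EE_eq_zero_iff]; exact hp₂0
      have : (EE p₁).natDegree ≤ D + 1 := hTD1
      rw [TDle]
      omega
    set Cs' := Cs.filter (fun a => a ≤ D) with hCs'def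
    have hCs'le : ∀ a ∈ Cs', a ≤ D := fun a ha => (Finset.mem_filter.mp ha).2
    have hvan₂ : ∀ i j : ℕ, i + j ≤ D → ¬(i ∈ Cs' ∧ i + j = D) →
        evalXY (i : K) (((r + 1) + j : ℕ) : K) p₂ = 0 := by
      intro i j hij hnc
      have hnc' : ¬(i ∈ Cs ∧ i + (j + 1) = D + 1) := by
        rintro ⟨h1, h2⟩
        exact hnc ⟨Finset.mem_filter.mpr ⟨h1, by omega⟩, by omega⟩
      have hv := hvan i (j + 1) (by omega) hnc'
      have hcast : ((r + (j + 1) : ℕ) : K) = (((r + 1) + j : ℕ) : K) := by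
        congr 1; omega
      rw [hcast] at hv
      have hw0 : evalXY (i : K) (((r + 1) + j : ℕ) : K) (Polynomial.C w) = 0 := by
        rw [evalXY_C, hwdef, Polynomial.eval_mul, Polynomial.eval_C, Px_eval_lt (by omega), mul_zero]
      have hv1 : evalXY (i : K) (((r + 1) + j : ℕ) : K) p₁ = 0 := by
        rw [hp₁def, map_sub, hv, hw0, sub_zero]
      rw [hp₂, map_mul] at hv1
      have hfacval : evalXY (i : K) (((r + 1) + j : ℕ) : K)
          (Polynomial.X - Polynomial.C (Polynomial.C ((r : ℕ) : K))) = ((j + 1 : ℕ) : K) := by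
        rw [map_sub, evalXY_X, evalXY_C, Polynomial.eval_C]
        push_cast
        ring
      rw [hfacval] at hv1
      rcases mul_eq_zero.mp hv1 with h | h
      · exfalso
        have : ((j + 1 : ℕ) : K) ≠ 0 := Nat.cast_ne_zero.mpr (by omega)
        exact this h
      · exact h
    have hrec := ih (r + 1) Cs' hCs'le p₂ hTD2 hvan₂
    have hstep : ∀ a ∈ Cs', (Polynomial.X - Polynomial.C (Polynomial.C ((r : ℕ) : K))) *
        ((fun a => Polynomial.C (Px (K := K) a) * Qy (r+1) (D - a)) a)
        = (fun a => Polynomial.C (Px (K := K) a) * Qy r (D + 1 - a)) a := by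
      intro a ha
      have hb : D + 1 - a = (D - a) + 1 := by have := hCs'le a ha; omega
      simp only
      rw [hb, Qy_peel]
      ring
    have hmul : (Polynomial.X - Polynomial.C (Polynomial.C ((r : ℕ) : K))) * p₂ ∈
        Submodule.span K ((fun a => Polynomial.C (Px (K := K) a) * Qy r (D + 1 - a)) '' ↑Cs) := by
      have himg : ∀ x ∈ ((fun a => Polynomial.C (Px (K := K) a) * Qy (r+1) (D - a)) '' ↑Cs'),
          (Polynomial.X - Polynomial.C (Polynomial.C ((r : ℕ) : K))) * x ∈
          Submodule.span K ((fun a => Polynomial.C (Px (K := K) a) * Qy r (D + 1 - a)) '' ↑Cs) := by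
        rintro x ⟨a, ha, rfl⟩
        have ha' : a ∈ Cs' := by exact_mod_cast ha
        rw [hstep a ha']
        refine Submodule.subset_span ?_
        exact Set.mem_image_of_mem _ (by
          have := (Finset.mem_filter.mp ha').1
          exact_mod_cast this)
      refine Submodule.span_induction (p := fun x _ =>
          (Polynomial.X - Polynomial.C (Polynomial.C ((r : ℕ) : K))) * x ∈
          Submodule.span K ((fun a => Polynomial.C (Px (K := K) a) * Qy r (D + 1 - a)) '' ↑Cs))
        (fun x hx => himg x hx) (by simp) ?_ ?_ hrec
      · intro x y _ _ hx hy
        rw [mul_add]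
        exact Submodule.add_mem _ hx hy
      · intro t x _ hx
        rw [mul_smul_comm]
        exact Submodule.smul_mem _ t hx
    have hfinal : p = Polynomial.C w +
        (Polynomial.X - Polynomial.C (Polynomial.C ((r : ℕ) : K))) * p₂ := by
      rw [← hp₂, hp₁def]
      ring
    rw [hfinal]
    exact Submodule.add_mem _ hCw_mem hmul

end StairMain

section TopComp

variable {K : Type*} [Field K]

open Polynomial

theorem EE_C (w : Polynomial K) : EE (Polynomial.C w) = Polynomial.map (Polynomial.C) w := by
  rw [EE, Polynomial.coe_eval₂RingHom, Polynomial.eval₂_C]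
  rfl

theorem topf_C (d : ℕ) (w : Polynomial K) :
    topf d (Polynomial.C w) = Polynomial.C (w.coeff d) := by
  rw [topf, EE_C, Polynomial.coeff_map]

theorem topf_CPx (a : ℕ) : topf a (Polynomial.C (Px (K := K) a)) = 1 := by
  rw [topf_C]
  have h := (Px_monic (K := K) a).coeff_natDegree
  rw [Px_natDegree] at h
  rw [h, Polynomial.C_1]

theorem topf_X_sub_CC (v : K) :
    topf 1 (Polynomial.X - Polynomial.C (Polynomial.C v)) = Polynomial.X := by
  rw [topf, map_sub]
  have h1 : EE (Polynomial.X : Polynomial (Polynomial K))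
      = Polynomial.C Polynomial.X * Polynomial.X := by
    rw [EE, Polynomial.coe_eval₂RingHom, Polynomial.eval₂_X]
  have h2 : EE (Polynomial.C (Polynomial.C v) : Polynomial (Polynomial K))
      = Polynomial.C (Polynomial.C v) := by
    rw [EE_C, Polynomial.map_C]
  rw [h1, h2, Polynomial.coeff_sub]
  rw [Polynomial.coeff_C_mul, Polynomial.coeff_X_one, mul_one]
  rw [Polynomial.coeff_C, if_neg (by omega), sub_zero]

theorem topf_Qy (r b : ℕ) : topf b (Qy (K := K) r b) = Polynomial.X ^ b := by
  induction b with
  | zero =>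
    rw [Qy]
    simp only [Finset.range_zero, Finset.prod_empty, pow_zero]
    rw [topf, map_one, Polynomial.coeff_one, if_pos rfl]
  | succ b ih =>
    rw [Qy, Finset.prod_range_succ, ← Qy]
    have := topf_mul (TDle_Qy (K := K) r b) (TDle_X_sub_CC (((r + b : ℕ)) : K))
    rw [show b + 1 = b + 1 from rfl]
    rw [this, ih, topf_X_sub_CC, pow_succ]

theorem topf_gen {a D : ℕ} (h : a ≤ D) :
    topf D (Polynomial.C (Px (K := K) a) * Qy 0 (D - a)) = Polynomial.X ^ (D - a) := by
  have hD : D = a + (D - a) := by omega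
  have := topf_mul (p := Polynomial.C (Px (K := K) a)) (q := Qy 0 (D - a))
    (d := a) (e := D - a) (TDle_C (by rw [Px_natDegree])) (TDle_Qy 0 (D - a))
  rw [← hD] at this
  rw [this, topf_CPx, topf_Qy, one_mul]

theorem topf_smul (d : ℕ) (c : K) (p : Polynomial (Polynomial K)) :
    topf d (c • p) = c • topf d p := by
  have h1 : c • p = Polynomial.C (Polynomial.C c) * p := by
    rw [Algebra.smul_def]; rfl
  rw [h1, topf, map_mul, EE_C, Polynomial.map_C]
  rw [Polynomial.coeff_C_mul, topf]
  rw [Polynomial.smul_eq_C_mul]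

theorem Qy_eval_lt [CharZero K] {r b j : ℕ} (u : K) (h : j < b) :
    evalXY u ((r + j : ℕ) : K) (Qy (K := K) r b) = 0 := by
  rw [Qy, map_prod]
  refine Finset.prod_eq_zero (Finset.mem_range.mpr h) ?_
  rw [map_sub, evalXY_X, evalXY_C, Polynomial.eval_C, sub_self]

end TopComp

section Digits

theorem digits_unique (β : ℕ) (hβ : 1 ≤ β) :
    ∀ (L : ℕ) (m m' : ℕ → ℕ), (∀ e, m e < β) → (∀ e, m' e < β) →
    (∑ e ∈ Finset.range L, m e * β ^ e) = (∑ e ∈ Finset.range L, m' e * β ^ e) →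
    ∀ e, e < L → m e = m' e := by
  intro L
  induction L with
  | zero => intro m m' _ _ _ e he; omega
  | succ L ih =>
    intro m m' hm hm' hsum e he
    have split : ∀ q : ℕ → ℕ, ∑ e ∈ Finset.range (L+1), q e * β ^ e
        = q 0 + β * ∑ e ∈ Finset.range L, q (e+1) * β ^ e := by
      intro q
      rw [Finset.sum_range_succ']
      have hcong : ∀ i ∈ Finset.range L, q (i+1) * β ^ (i+1) = β * (q (i+1) * β ^ i) := by
        intro i _; rw [pow_succ]; ring
      rw [Finset.sum_congr rfl hcong, ← Finset.mul_sum, pow_zero, mul_one]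
      ring
    rw [split m, split m'] at hsum
    have h0 : m 0 = m' 0 := by
      have e1 : (m 0 + β * ∑ e ∈ Finset.range L, m (e+1) * β ^ e) % β = m 0 % β := by
        rw [Nat.add_mul_mod_self_left]
      have e2 : (m' 0 + β * ∑ e ∈ Finset.range L, m' (e+1) * β ^ e) % β = m' 0 % β := by
        rw [Nat.add_mul_mod_self_left]
      rw [hsum] at e1
      rw [e1] at e2
      rwa [Nat.mod_eq_of_lt (hm 0), Nat.mod_eq_of_lt (hm' 0)] at e2
    have hS : ∑ e ∈ Finset.range L, m (e+1) * β ^ e = ∑ e ∈ Finset.range L, m' (e+1) * β ^ e := by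
      rw [h0] at hsum
      have := Nat.add_left_cancel hsum
      exact Nat.eq_of_mul_eq_mul_left (by omega) this
    rcases e with _ | e'
    · exact h0
    · exact ih (fun i => m (i+1)) (fun i => m' (i+1)) (fun i => hm _) (fun i => hm' _) hS e'
        (by omega)

end Digits

section Count

variable {M : Type*} [Fintype M] [DecidableEq M]

def cnt {N : ℕ} (π : Fin N → M) (e : M) : ℕ :=
  (Finset.univ.filter (fun i => π i = e)).card

theorem sum_comp_cnt {N : ℕ} (π : Fin N → M) {R : Type*} [AddCommMonoid R] (f : M → R) :
    ∑ i, f (π i) = ∑ e, (cnt π e) • f e := by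
  rw [← Finset.sum_fiberwise Finset.univ π (fun i => f (π i))]
  refine Finset.sum_congr rfl fun e _ => ?_
  rw [Finset.sum_congr rfl (fun i hi => by
    rw [(Finset.mem_filter.mp hi).2] : ∀ i ∈ Finset.univ.filter (fun i => π i = e),
      f (π i) = f e)]
  rw [Finset.sum_const]
  rfl

theorem sum_comp_cnt_nat {N : ℕ} (π : Fin N → M) (f : M → ℕ) :
    ∑ i, f (π i) = ∑ e, (cnt π e) * f e := by
  rw [sum_comp_cnt π f]
  simp [smul_eq_mul]

theorem cnt_total {N : ℕ} (π : Fin N → M) : ∑ e, cnt π e = N := by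
  have := sum_comp_cnt_nat π (fun _ => 1)
  simp at this
  rw [← this]

theorem prod_comp_cnt {N : ℕ} (π : Fin N → M) {R : Type*} [CommMonoid R] (f : M → R) :
    ∏ i, f (π i) = ∏ e, f e ^ (cnt π e) := by
  rw [← Finset.prod_fiberwise Finset.univ π (fun i => f (π i))]
  refine Finset.prod_congr rfl fun e _ => ?_
  rw [Finset.prod_congr rfl (fun i hi => by
    rw [(Finset.mem_filter.mp hi).2] : ∀ i ∈ Finset.univ.filter (fun i => π i = e),
      f (π i) = f e)]
  rw [Finset.prod_const]
  rfl

theorem cnt_const {N : ℕ} (e₀ e : M) :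
    cnt (fun _ : Fin N => e₀) e = if e = e₀ then N else 0 := by
  rw [cnt]
  split_ifs with h
  · rw [h]
    simp
  · rw [Finset.card_eq_zero]
    ext i
    simp only [Finset.mem_filter, Finset.mem_univ, true_and, Finset.notMem_empty, iff_false]
    exact fun hc => h (hc.symm)

theorem card_fin_filter (s2 : ℕ) (p : ℕ → Prop) [DecidablePred p] :
    (Finset.univ.filter (fun i : Fin s2 => p (i : ℕ))).card
      = ((Finset.range s2).filter p).card := by
  rw [← Finset.card_image_of_injective
    (Finset.univ.filter (fun i : Fin s2 => p (i : ℕ))) (Fin.val_injective)]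
  congr 1
  ext c
  simp only [Finset.mem_image, Finset.mem_filter, Finset.mem_univ, true_and, Finset.mem_range]
  constructor
  · rintro ⟨a, ha, rfl⟩; exact ⟨a.2, ha⟩
  · rintro ⟨hc, hp⟩; exact ⟨⟨c, hc⟩, hp, rfl⟩

theorem cnt_two {s : ℕ} (e₀ e₁ e : M) (h01 : e₀ ≠ e₁) :
    cnt (fun i : Fin (2*s) => if (i : ℕ) < s then e₀ else e₁) e
      = (if e = e₀ then s else 0) + (if e = e₁ then s else 0) := by
  rw [cnt]
  by_cases h0 : e = e₀
  · rw [if_pos h0, if_neg (show ¬ e = e₁ by rw [h0]; exact h01), add_zero, h0]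
    have hset : (Finset.univ.filter
        (fun i : Fin (2*s) => (if (i : ℕ) < s then e₀ else e₁) = e₀))
        = Finset.univ.filter (fun i : Fin (2*s) => (i : ℕ) < s) := by
      apply Finset.filter_congr
      intro i _
      split_ifs with h
      · exact iff_of_true rfl h
      · exact iff_of_false (fun hc => h01 hc.symm) h
    rw [hset, card_fin_filter (2*s) (fun i => i < s)]
    have h2 : ((Finset.range (2*s)).filter (fun i => i < s)) = Finset.range s := by
      ext i
      simp only [Finset.mem_filter, Finset.mem_range]
      omega
    rw [h2, Finset.card_range]
  · rw [if_neg h0]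
    by_cases h1 : e = e₁
    · rw [if_pos h1, zero_add]
      have hset : (Finset.univ.filter
          (fun i : Fin (2*s) => (if (i : ℕ) < s then e₀ else e₁) = e))
          = Finset.univ.filter (fun i : Fin (2*s) => ¬ ((i : ℕ) < s)) := by
        apply Finset.filter_congr
        intro i _
        split_ifs with h
        · exact iff_of_false (fun hc => h0 hc.symm) (not_not_intro h)
        · exact iff_of_true h1.symm h
      rw [hset, card_fin_filter (2*s) (fun i => ¬ i < s)]
      have h3 : ((Finset.range (2*s)).filter (fun i => ¬ i < s)) = Finset.Ico s (2*s) := by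
        ext i
        simp only [Finset.mem_filter, Finset.mem_range, Finset.mem_Ico]
        omega
      rw [h3, Nat.card_Ico]
      omega
    · rw [if_neg h1, Finset.card_eq_zero]
      ext i
      simp only [Finset.mem_filter, Finset.mem_univ, true_and, Finset.notMem_empty, iff_false]
      intro hc
      split_ifs at hc
      · exact h0 hc.symm
      · exact h1 hc.symm

end Count

section Sidon

theorem A_le_D {s ℓ : ℕ} (e : Fin (ℓ+1)) : (2*s+1)^(e:ℕ) ≤ (2*s+1)^ℓ :=
  Nat.pow_le_pow_right (by omega) (by omega)

theorem sidon {s ℓ : ℕ} (n n' : Fin (ℓ+1) → ℕ)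
    (hn : ∑ e, n e = 2*s) (hn' : ∑ e, n' e = 2*s)
    (hsum : ∑ e, n e * ((2*s+1)^ℓ - (2*s+1)^(e:ℕ))
      = ∑ e, n' e * ((2*s+1)^ℓ - (2*s+1)^(e:ℕ))) :
    n = n' := by
  set β := 2*s+1 with hβ
  set D := β^ℓ with hD
  have hcompl : ∀ q : Fin (ℓ+1) → ℕ, (∑ e, q e = 2*s) →
      (∑ e, q e * (D - β^(e:ℕ))) + (∑ e, q e * β^(e:ℕ)) = 2*s*D := by
    intro q hq
    rw [← Finset.sum_add_distrib]
    have hterm : ∀ e : Fin (ℓ+1), q e * (D - β^(e:ℕ)) + q e * β^(e:ℕ) = q e * D := by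
      intro e
      have h1 : (D - β^(e:ℕ)) + β^(e:ℕ) = D := Nat.sub_add_cancel (A_le_D e)
      rw [← Nat.left_distrib, h1]
    rw [Finset.sum_congr rfl (fun e _ => hterm e), ← Finset.sum_mul, hq]
  have hA : ∑ e, n e * β^(e:ℕ) = ∑ e, n' e * β^(e:ℕ) := by
    have h1 := hcompl n hn
    have h2 := hcompl n' hn'
    set T := 2*s*D with hT
    omega
  have hbound : ∀ (q : Fin (ℓ+1) → ℕ), (∑ e, q e = 2*s) → ∀ e, q e < β := by
    intro q hq e
    have : q e ≤ ∑ e', q e' := Finset.single_le_sum (fun _ _ => Nat.zero_le _) (Finset.mem_univ e)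
    omega
  set m : ℕ → ℕ := fun e' => if h : e' < ℓ+1 then n ⟨e', h⟩ else 0 with hm
  set m' : ℕ → ℕ := fun e' => if h : e' < ℓ+1 then n' ⟨e', h⟩ else 0 with hm'
  have hconv : ∀ (q : Fin (ℓ+1) → ℕ),
      ∑ e ∈ Finset.range (ℓ+1), (fun e' => if h : e' < ℓ+1 then q ⟨e', h⟩ else 0) e * β^e
        = ∑ e : Fin (ℓ+1), q e * β^(e:ℕ) := by
    intro q
    rw [← Fin.sum_univ_eq_sum_range (fun e' => (if h : e' < ℓ+1 then q ⟨e', h⟩ else 0) * β^e')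
      (ℓ+1)]
    refine Finset.sum_congr rfl fun e _ => ?_
    simp only [e.2, dif_pos, Fin.eta]
  have hkey := digits_unique β (by omega) (ℓ+1) m m'
    (fun e => by
      rw [hm]
      by_cases h : e < ℓ+1
      · simp only [dif_pos h]; exact hbound n hn _
      · simp only [dif_neg h]; omega)
    (fun e => by
      rw [hm']
      by_cases h : e < ℓ+1
      · simp only [dif_pos h]; exact hbound n' hn' _
      · simp only [dif_neg h]; omega)
    (by rw [hm, hm', hconv n, hconv n', hA])
  funext e
  have := hkey (e : ℕ) e.2
  rw [hm, hm'] at this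
  simpa [e.2] using this

theorem b_inj {s ℓ : ℕ} (hs : 1 ≤ s) {e e' : Fin (ℓ+1)}
    (h : (2*s+1)^ℓ - (2*s+1)^(e:ℕ) = (2*s+1)^ℓ - (2*s+1)^(e':ℕ)) : e = e' := by
  have h1 := A_le_D (s := s) e
  have h2 := A_le_D (s := s) e'
  have h3 : (2*s+1)^(e:ℕ) = (2*s+1)^(e':ℕ) := by omega
  have : (e:ℕ) = (e':ℕ) := by
    by_contra hne
    rcases Nat.lt_or_ge (e:ℕ) (e':ℕ) with hlt | hge
    · have := Nat.pow_lt_pow_right (by omega : 1 < 2*s+1) hlt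
      omega
    · have hlt' : (e':ℕ) < (e:ℕ) := by omega
      have := Nat.pow_lt_pow_right (by omega : 1 < 2*s+1) hlt'
      omega
  exact Fin.ext this

end Sidon

section Extract

variable {K : Type*} [Field K]

open Polynomial

theorem pow_expand {ℓ s : ℕ} (lam : Fin (ℓ+1) → K) (b : Fin (ℓ+1) → ℕ) :
    (∑ e, Polynomial.C (lam e) * Polynomial.X ^ (b e)) ^ (2*s)
    = ∑ π ∈ Fintype.piFinset (fun _ : Fin (2*s) => (Finset.univ : Finset (Fin (ℓ+1)))),
        Polynomial.C (∏ i, lam (π i)) * Polynomial.X ^ (∑ i, b (π i)) := by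
  have h1 : (∑ e, Polynomial.C (lam e) * Polynomial.X ^ (b e)) ^ (2*s)
      = ∏ _i : Fin (2*s), (∑ e, Polynomial.C (lam e) * Polynomial.X ^ (b e)) := by
    rw [Finset.prod_const, Finset.card_univ, Fintype.card_fin]
  rw [h1, Finset.prod_univ_sum]
  refine Finset.sum_congr rfl fun π _ => ?_
  rw [Finset.prod_mul_distrib, ← map_prod, Finset.prod_pow_eq_pow_sum]

theorem coeff_pow_expand {ℓ s : ℕ} (lam : Fin (ℓ+1) → K) (b : Fin (ℓ+1) → ℕ) (N : ℕ) :
    ((∑ e, Polynomial.C (lam e) * Polynomial.X ^ (b e)) ^ (2*s)).coeff N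
    = ∑ π ∈ Fintype.piFinset (fun _ : Fin (2*s) => (Finset.univ : Finset (Fin (ℓ+1)))),
        if (∑ i, b (π i)) = N then ∏ i, lam (π i) else 0 := by
  rw [pow_expand, Polynomial.finset_sum_coeff]
  refine Finset.sum_congr rfl fun π _ => ?_
  rw [Polynomial.coeff_C_mul, Polynomial.coeff_X_pow]
  rw [mul_ite, mul_one, mul_zero]
  exact if_congr eq_comm rfl rfl

theorem relations [CharZero K] {s ℓ : ℕ} (hs : 1 ≤ s) (lam : Fin ℓ → Fin (ℓ+1) → K)
    (hU : ∑ j : Fin ℓ, (∑ e, Polynomial.C (lam j e)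
            * Polynomial.X ^ ((2*s+1)^ℓ - (2*s+1)^(e:ℕ))) ^ (2*s)
      = ∑ e : Fin (ℓ+1), (Polynomial.X : Polynomial K) ^ (2*s * ((2*s+1)^ℓ - (2*s+1)^(e:ℕ)))) :
    (∀ e, ∑ j, lam j e ^ (2*s) = 1) ∧
      (∀ e₀ e₁, e₀ ≠ e₁ → ∑ j, lam j e₀ ^ s * lam j e₁ ^ s = 0) := by
  classical
  set bb : Fin (ℓ+1) → ℕ := fun e => (2*s+1)^ℓ - (2*s+1)^(e:ℕ) with hbb
  have hchar : ∀ (π : Fin (2*s) → Fin (ℓ+1)) (nb : Fin (ℓ+1) → ℕ), (∑ e, nb e = 2*s) →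
      ((∑ i, bb (π i)) = ∑ e, nb e * bb e ↔ cnt π = nb) := by
    intro π nb hnb
    constructor
    · intro h
      refine sidon (cnt π) nb (cnt_total π) hnb ?_
      rw [← sum_comp_cnt_nat π bb]
      exact h
    · intro h
      rw [sum_comp_cnt_nat π bb, h]
  -- coefficient of the RHS of hU at N
  have hRHS : ∀ N : ℕ, ((∑ e : Fin (ℓ+1), (Polynomial.X : Polynomial K) ^ (2*s * bb e)).coeff N)
      = ∑ e : Fin (ℓ+1), if 2*s*bb e = N then (1:K) else 0 := by
    intro N
    rw [Polynomial.finset_sum_coeff]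
    refine Finset.sum_congr rfl fun e _ => ?_
    rw [Polynomial.coeff_X_pow]
    exact if_congr eq_comm rfl rfl
  have hLHS : ∀ N : ℕ, ((∑ j : Fin ℓ, (∑ e, Polynomial.C (lam j e)
        * Polynomial.X ^ (bb e)) ^ (2*s)).coeff N)
      = ∑ j : Fin ℓ, ∑ π ∈ Fintype.piFinset (fun _ : Fin (2*s) => (Finset.univ : Finset (Fin (ℓ+1)))),
          (if (∑ i, bb (π i)) = N then ∏ i, lam j (π i) else 0) := by
    intro N
    rw [Polynomial.finset_sum_coeff]
    exact Finset.sum_congr rfl fun j _ => coeff_pow_expand (lam j) bb N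
  have hEq : ∀ N : ℕ,
      (∑ j : Fin ℓ, ∑ π ∈ Fintype.piFinset (fun _ : Fin (2*s) => (Finset.univ : Finset (Fin (ℓ+1)))),
          (if (∑ i, bb (π i)) = N then ∏ i, lam j (π i) else 0))
      = ∑ e : Fin (ℓ+1), if 2*s*bb e = N then (1:K) else 0 := by
    intro N
    rw [← hRHS N, ← hLHS N, hU]
  constructor
  · -- diagonal relations
    intro estar
    have hN := hEq (2*s*bb estar)
    have hconst : ∀ π : Fin (2*s) → Fin (ℓ+1),
        ((∑ i, bb (π i)) = 2*s*bb estar) ↔ π = fun _ => estar := by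
      intro π
      have hnb : (∑ e, (if e = estar then 2*s else 0)) = 2*s := by
        rw [Finset.sum_ite_eq' Finset.univ estar (fun _ => 2*s)]
        simp
      have hval : (∑ e, (if e = estar then 2*s else 0) * bb e) = 2*s*bb estar := by
        have : ∀ e : Fin (ℓ+1), (if e = estar then 2*s else 0) * bb e
            = if e = estar then 2*s*bb e else 0 := by
          intro e; split_ifs <;> simp
        rw [Finset.sum_congr rfl fun e _ => this e,
          Finset.sum_ite_eq' Finset.univ estar (fun e => 2*s*bb e)]
        simp
      rw [show (2*s*bb estar) = ∑ e, (if e = estar then 2*s else 0) * bb e from hval.symm]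
      rw [hchar π _ hnb]
      constructor
      · intro h
        funext i
        by_contra hne
        have h1 : cnt π (π i) = 0 := by
          rw [h]
          show (if π i = estar then 2*s else 0) = 0
          exact if_neg hne
        have h2 : i ∈ Finset.univ.filter (fun i' => π i' = π i) := by
          simp
        rw [cnt] at h1
        rw [Finset.card_eq_zero] at h1
        rw [h1] at h2
        exact absurd h2 (Finset.notMem_empty i)
      · rintro rfl
        funext e
        rw [cnt_const]
    have hL : (∑ j : Fin ℓ, ∑ π ∈ Fintype.piFinset
          (fun _ : Fin (2*s) => (Finset.univ : Finset (Fin (ℓ+1)))),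
          (if (∑ i, bb (π i)) = 2*s*bb estar then ∏ i, lam j (π i) else 0))
        = ∑ j, lam j estar ^ (2*s) := by
      refine Finset.sum_congr rfl fun j _ => ?_
      have hstep : ∀ π ∈ Fintype.piFinset (fun _ : Fin (2*s) => (Finset.univ : Finset (Fin (ℓ+1)))),
          (if (∑ i, bb (π i)) = 2*s*bb estar then ∏ i, lam j (π i) else 0)
          = (if π = (fun _ => estar) then ∏ i, lam j (π i) else 0) := by
        intro π _
        exact if_congr (hconst π) rfl rfl
      rw [Finset.sum_congr rfl hstep,
        Finset.sum_ite_eq' (Fintype.piFinset (fun _ : Fin (2*s) => (Finset.univ : Finset (Fin (ℓ+1)))))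
          (fun _ => estar) (fun π => ∏ i, lam j (π i))]
      rw [if_pos (by simp)]
      rw [Finset.prod_const, Finset.card_univ, Fintype.card_fin]
    have hR : (∑ e : Fin (ℓ+1), if 2*s*bb e = 2*s*bb estar then (1:K) else 0) = 1 := by
      have hcond : ∀ e : Fin (ℓ+1), (2*s*bb e = 2*s*bb estar) ↔ e = estar := by
        intro e
        constructor
        · intro h
          have : bb e = bb estar := by
            have hs0 : 2*s ≠ 0 := by omega
            exact Nat.eq_of_mul_eq_mul_left (by omega) h
          exact b_inj hs this
        · rintro rfl; rfl
      have : ∀ e : Fin (ℓ+1), (if 2*s*bb e = 2*s*bb estar then (1:K) else 0)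
          = (if e = estar then (1:K) else 0) := fun e => if_congr (hcond e) rfl rfl
      rw [Finset.sum_congr rfl fun e _ => this e,
        Finset.sum_ite_eq' Finset.univ estar (fun _ => (1:K))]
      simp
    rw [hL, hR] at hN
    exact hN
  · -- off-diagonal relations
    intro e₀ e₁ h01
    set nb : Fin (ℓ+1) → ℕ := fun e => (if e = e₀ then s else 0) + (if e = e₁ then s else 0)
      with hnbdef
    have hnbsum : ∑ e, nb e = 2*s := by
      show (∑ e : Fin (ℓ+1), ((if e = e₀ then s else 0) + (if e = e₁ then s else 0))) = 2*s
      rw [Finset.sum_add_distrib]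
      rw [Finset.sum_ite_eq' Finset.univ e₀ (fun _ => s),
        Finset.sum_ite_eq' Finset.univ e₁ (fun _ => s)]
      simp
      omega
    set N := ∑ e, nb e * bb e with hNdef
    have hN := hEq N
    -- each π contributing satisfies cnt π = nb
    have hval : ∀ j : Fin ℓ, ∀ π : Fin (2*s) → Fin (ℓ+1), cnt π = nb →
        ∏ i, lam j (π i) = lam j e₀ ^ s * lam j e₁ ^ s := by
      intro j π hπ
      rw [prod_comp_cnt π (lam j), hπ]
      have hsplit : ∀ e : Fin (ℓ+1), lam j e ^ nb e
          = (if e = e₀ then lam j e ^ s else 1) * (if e = e₁ then lam j e ^ s else 1) := by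
        intro e
        show lam j e ^ ((if e = e₀ then s else 0) + (if e = e₁ then s else 0)) = _
        rw [pow_add]
        congr 1 <;> (split_ifs <;> simp)
      rw [Finset.prod_congr rfl fun e _ => hsplit e, Finset.prod_mul_distrib]
      rw [Finset.prod_ite_eq' Finset.univ e₀ (fun e => lam j e ^ s),
        Finset.prod_ite_eq' Finset.univ e₁ (fun e => lam j e ^ s)]
      simp
    have hfilter : ∀ π : Fin (2*s) → Fin (ℓ+1),
        ((∑ i, bb (π i)) = N) ↔ cnt π = nb := fun π => hchar π nb hnbsum
    -- compute LHS
    set Mset := (Fintype.piFinset (fun _ : Fin (2*s) => (Finset.univ : Finset (Fin (ℓ+1))))).filter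
      (fun π => cnt π = nb) with hMset
    have hLH : ∀ j : Fin ℓ, (∑ π ∈ Fintype.piFinset
          (fun _ : Fin (2*s) => (Finset.univ : Finset (Fin (ℓ+1)))),
          (if (∑ i, bb (π i)) = N then ∏ i, lam j (π i) else 0))
        = Mset.card • (lam j e₀ ^ s * lam j e₁ ^ s) := by
      intro j
      have h1 : ∀ π ∈ Fintype.piFinset (fun _ : Fin (2*s) => (Finset.univ : Finset (Fin (ℓ+1)))),
          (if (∑ i, bb (π i)) = N then ∏ i, lam j (π i) else 0)
          = (if cnt π = nb then ∏ i, lam j (π i) else 0) := by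
        intro π _
        exact if_congr (hfilter π) rfl rfl
      rw [Finset.sum_congr rfl h1, ← Finset.sum_filter, ← hMset]
      rw [Finset.sum_congr rfl (fun π hπ => hval j π (Finset.mem_filter.mp hπ).2)]
      rw [Finset.sum_const]
    -- Mset is nonempty
    have hmem : (fun i : Fin (2*s) => if (i : ℕ) < s then e₀ else e₁) ∈ Mset := by
      rw [hMset, Finset.mem_filter]
      refine ⟨by simp, ?_⟩
      funext e
      rw [cnt_two e₀ e₁ e h01]
    have hcard : (Mset.card : K) ≠ 0 := by
      have hpos : 0 < Mset.card := Finset.card_pos.mpr ⟨_, hmem⟩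
      exact Nat.cast_ne_zero.mpr hpos.ne'
    -- RHS is zero
    have hR : (∑ e : Fin (ℓ+1), if 2*s*bb e = N then (1:K) else 0) = 0 := by
      refine Finset.sum_eq_zero fun e _ => ?_
      rw [if_neg]
      intro hcond
      have hconstsum : (∑ i : Fin (2*s), bb ((fun _ => e) i)) = N := by
        rw [Finset.sum_const, Finset.card_univ, Fintype.card_fin, ← hcond]
        rw [smul_eq_mul]
      have := (hfilter (fun _ => e)).mp hconstsum
      have h0 := congrFun this e₀
      rw [cnt_const] at h0
      have h0' : (if e₀ = e then 2*s else 0)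
          = (if e₀ = e₀ then s else 0) + (if e₀ = e₁ then s else 0) := h0
      rw [if_pos rfl, if_neg h01, add_zero] at h0'
      by_cases he : e₀ = e
      · rw [if_pos he] at h0'; omega
      · rw [if_neg he] at h0'; omega
    rw [hR] at hN
    have hfin : Mset.card • (∑ j, lam j e₀ ^ s * lam j e₁ ^ s) = 0 := by
      rw [Finset.smul_sum]
      rw [← hN]
      exact Finset.sum_congr rfl fun j _ => (hLH j).symm
    rw [nsmul_eq_mul] at hfin
    rcases mul_eq_zero.mp hfin with h | h
    · exact absurd h hcard
    · exact h

end Extract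

section MainContra

variable {K : Type*} [Field K]

open Polynomial

theorem ortho_contra {s ℓ : ℕ} (hs : 1 ≤ s) (hl : 1 ≤ ℓ)
    (lam : Fin ℓ → Fin (ℓ+1) → K)
    (hα : ∀ e, ∑ j, lam j e ^ (2*s) = 1)
    (hβ : ∀ e₀ e₁, e₀ ≠ e₁ → ∑ j, lam j e₀ ^ s * lam j e₁ ^ s = 0) : False := by
  classical
  set w : Fin (ℓ+1) → (Fin ℓ → K) := fun e j => lam j e ^ s with hw
  have hdot : ∀ e₀ e₁ : Fin (ℓ+1), (∑ j, w e₀ j * w e₁ j) = if e₀ = e₁ then 1 else 0 := by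
    intro e₀ e₁
    by_cases h : e₀ = e₁
    · subst h
      rw [if_pos rfl, ← hα e₀]
      refine Finset.sum_congr rfl fun j _ => ?_
      show lam j e₀ ^ s * lam j e₀ ^ s = lam j e₀ ^ (2*s)
      rw [← pow_add]
      congr 1
      omega
    · rw [if_neg h, ← hβ e₀ e₁ h]
  have hli : LinearIndependent K w := by
    rw [linearIndependent_iff']
    intro t c hsum e he
    have h2 : (0:K) = ∑ i ∈ t, c i * (∑ j, w i j * w e j) := by
      have step1 : (0:K) = ∑ j : Fin ℓ, (∑ i ∈ t, c i • w i) j * w e j := by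
        rw [hsum]
        simp
      have step2 : ∀ j : Fin ℓ, (∑ i ∈ t, c i • w i) j * w e j
          = ∑ i ∈ t, c i * w i j * w e j := by
        intro j
        rw [Finset.sum_apply, Finset.sum_mul]
        refine Finset.sum_congr rfl fun i _ => ?_
        rw [Pi.smul_apply, smul_eq_mul]
      rw [step1, Finset.sum_congr rfl fun j _ => step2 j, Finset.sum_comm]
      refine Finset.sum_congr rfl fun i _ => ?_
      rw [Finset.mul_sum]
      refine Finset.sum_congr rfl fun j _ => ?_
      ring
    have h3 : (0:K) = c e := by
      rw [h2, Finset.sum_congr rfl (fun i _ => by rw [hdot i e])]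
      rw [Finset.sum_congr rfl (fun i (_ : i ∈ t) => by
        rw [mul_ite, mul_one, mul_zero] : ∀ i ∈ t,
          c i * (if i = e then (1:K) else 0) = if i = e then c i else 0)]
      rw [Finset.sum_ite_eq' t e c, if_pos he]
    exact h3.symm
  have hcard := hli.fintype_card_le_finrank
  rw [Module.finrank_fin_fun, Fintype.card_fin] at hcard
  omega

theorem main_contra (hsr : ∀ x : K, SOS x → x ≠ -1)
    {s ℓ : ℕ} (hs : 1 ≤ s) (hl : 1 ≤ ℓ)
    (g : Fin ℓ → Polynomial (Polynomial K))
    (hrep : ∑ j, g j ^ (2*s)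
      = ∑ e : Fin (ℓ+1), (Polynomial.C (Px ((2*s+1)^(e:ℕ)))
          * Qy 0 ((2*s+1)^ℓ - (2*s+1)^(e:ℕ))) ^ (2*s)) :
    False := by
  classical
  haveI hcz : CharZero K := semireal_charZero hsr
  set D := (2*s+1)^ℓ with hD
  set q : Fin (ℓ+1) → Polynomial (Polynomial K) :=
    fun e => Polynomial.C (Px ((2*s+1)^(e:ℕ))) * Qy 0 (D - (2*s+1)^(e:ℕ)) with hq
  set F : Polynomial (Polynomial K) := ∑ e, q e ^ (2*s) with hF
  have hrep' : ∑ j, g j ^ (2*s) = F := hrep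
  have hAleD : ∀ e : Fin (ℓ+1), (2*s+1)^(e:ℕ) ≤ D := fun e => A_le_D e
  have hTDq : ∀ e, TDle (q e) D := by
    intro e
    have := TDle_gen (K := K) (a := (2*s+1)^(e:ℕ)) (b := D - (2*s+1)^(e:ℕ)) (r := 0)
    rw [show (2*s+1)^(e:ℕ) + (D - (2*s+1)^(e:ℕ)) = D by have := hAleD e; omega] at this
    exact this
  have hTDF : TDle F (2*s*D) := by
    refine TDle_sum _ _ _ fun e _ => ?_
    have := TDle_pow (hTDq e) (2*s)
    exact this
  -- the staircase corner set
  set Cs : Finset ℕ := Finset.image (fun e : Fin (ℓ+1) => (2*s+1)^(e:ℕ)) Finset.univ with hCs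
  have hCsle : ∀ a ∈ Cs, a ≤ D := by
    intro a ha
    rw [hCs, Finset.mem_image] at ha
    obtain ⟨e, _, rfl⟩ := ha
    exact hAleD e
  -- vanishing of F on the staircase
  have hvanF : ∀ i j : ℕ, i + j ≤ D → ¬(i ∈ Cs ∧ i + j = D) →
      evalXY (i : K) ((0 + j : ℕ) : K) F = 0 := by
    intro i j hij hnc
    rw [hF, map_sum]
    refine Finset.sum_eq_zero fun e _ => ?_
    rw [map_pow]
    have hcase : i < (2*s+1)^(e:ℕ) ∨ j < D - (2*s+1)^(e:ℕ) := by
      by_contra hcon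
      push_neg at hcon
      have h1 : i ≥ (2*s+1)^(e:ℕ) := hcon.1
      have h2 : j ≥ D - (2*s+1)^(e:ℕ) := hcon.2
      have h3 := hAleD e
      have h4 : i = (2*s+1)^(e:ℕ) ∧ i + j = D := by omega
      exact hnc ⟨by rw [hCs, Finset.mem_image]; exact ⟨e, Finset.mem_univ e, h4.1.symm⟩, h4.2⟩
    have hq0 : evalXY (i : K) ((0 + j : ℕ) : K) (q e) = 0 := by
      rw [hq]
      simp only
      rw [map_mul]
      rcases hcase with hlt | hlt
      · rw [evalXY_C, Px_eval_lt hlt, zero_mul]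
      · rw [Qy_eval_lt (r := 0) _ hlt, mul_zero]
    rw [hq0]
    rw [zero_pow (by omega)]
  -- degree forcing and vanishing forcing for the g j
  have hTDg : ∀ j, TDle (g j) D := deg_force hsr hs hl g hrep' hTDF
  have hvg : ∀ jj : Fin ℓ, ∀ i j : ℕ, i + j ≤ D → ¬(i ∈ Cs ∧ i + j = D) →
      evalXY (i : K) ((0 + j : ℕ) : K) (g jj) = 0 := by
    intro jj i j hij hnc
    have h1 : ∑ j' : Fin ℓ, (evalXY (i : K) ((0 + j : ℕ) : K) (g j')) ^ (2*s) = 0 := by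
      have := congrArg (evalXY (i : K) ((0 + j : ℕ) : K)) hrep'
      rw [map_sum] at this
      simp only [map_pow] at this
      rw [this]
      exact hvanF i j hij hnc
    exact FR_scalar hsr hs _ h1 jj
  -- span forcing
  have hspan : ∀ j, g j ∈ Submodule.span K
      ((fun a => Polynomial.C (Px (K := K) a) * Qy 0 (D - a)) '' ↑Cs) := by
    intro j
    exact stair_span D 0 Cs hCsle (g j) (hTDg j) (fun i jj hij hnc => hvg j i jj hij hnc)
  have himg : ((fun a => Polynomial.C (Px (K := K) a) * Qy 0 (D - a)) '' ↑Cs)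
      = Set.range q := by
    ext x
    constructor
    · rintro ⟨a, ha, rfl⟩
      rw [hCs] at ha
      simp only [Finset.coe_image, Set.mem_image, Finset.mem_coe] at ha
      obtain ⟨e, _, rfl⟩ := ha
      exact ⟨e, rfl⟩
    · rintro ⟨e, rfl⟩
      refine ⟨(2*s+1)^(e:ℕ), ?_, rfl⟩
      rw [hCs]
      simp only [Finset.coe_image, Set.mem_image, Finset.mem_coe]
      exact ⟨e, by simp, rfl⟩
  have hlam : ∀ j, ∃ lam : Fin (ℓ+1) → K, ∑ e, lam e • q e = g j := by
    intro j
    have := hspan j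
    rw [himg] at this
    exact (Submodule.mem_span_range_iff_exists_fun K).mp this
  choose lam hlamspec using hlam
  -- pass to top forms
  have htopq : ∀ e, topf D (q e) = Polynomial.X ^ (D - (2*s+1)^(e:ℕ)) := by
    intro e
    rw [hq]
    exact topf_gen (hAleD e)
  have htopg : ∀ j, topf D (g j) = ∑ e, Polynomial.C (lam j e)
      * Polynomial.X ^ (D - (2*s+1)^(e:ℕ)) := by
    intro j
    rw [← hlamspec j, topf_sum]
    refine Finset.sum_congr rfl fun e _ => ?_
    rw [topf_smul, htopq e, Polynomial.smul_eq_C_mul]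
  have hU : ∑ j : Fin ℓ, (∑ e, Polynomial.C (lam j e)
        * Polynomial.X ^ (D - (2*s+1)^(e:ℕ))) ^ (2*s)
      = ∑ e : Fin (ℓ+1), (Polynomial.X : Polynomial K) ^ (2*s * (D - (2*s+1)^(e:ℕ))) := by
    have h1 := congrArg (topf (2*s*D)) hrep'
    rw [topf_sum, topf_sum] at h1
    have h2 : ∀ j, topf (2*s*D) (g j ^ (2*s)) = (topf D (g j)) ^ (2*s) :=
      fun j => topf_pow (hTDg j) (2*s)
    have h3 : ∀ e, topf (2*s*D) (q e ^ (2*s)) = (topf D (q e)) ^ (2*s) :=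
      fun e => topf_pow (hTDq e) (2*s)
    rw [Finset.sum_congr rfl fun j _ => h2 j, Finset.sum_congr rfl fun e _ => h3 e] at h1
    rw [Finset.sum_congr rfl fun j _ => congrArg (· ^ (2*s)) (htopg j)] at h1
    rw [h1]
    refine Finset.sum_congr rfl fun e _ => ?_
    rw [htopq e, ← pow_mul, mul_comm (D - (2*s+1)^(e:ℕ)) (2*s)]
  obtain ⟨hα, hβ⟩ := relations hs lam hU
  exact ortho_contra hs hl lam hα hβ

end MainContra
open MvPolynomial

/-- Let `A` be a commutative ring with identity in which `-1` is not a sum of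
squares, and let `n ≥ 2`, `s ≥ 1`. Then the `2s`-th Pythagoras number of `A[x_1,…,x_n]` is
infinite: for every `ℓ > 0` there is an element that is a finite sum of `2s`-th powers
but not a sum of `ℓ` `2s`-th powers. -/
theorem pythagoras_2s_polynomialRing_over_ring_infinite {A : Type*} [CommRing A]
    (hA : ∀ (m : ℕ) (a : Fin m → A), (∑ i, a i ^ 2) ≠ -1)
    (n s : ℕ) (hn : 2 ≤ n) (hs : 1 ≤ s)
    (ℓ : ℕ) (hℓ : 0 < ℓ) :
    ∃ f : MvPolynomial (Fin n) A,
      (∃ (m : ℕ) (g : Fin m → MvPolynomial (Fin n) A), f = ∑ i, g i ^ (2 * s)) ∧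
      ¬ ∃ g : Fin ℓ → MvPolynomial (Fin n) A, f = ∑ i, g i ^ (2 * s) := by
  classical
  set i0 : Fin n := ⟨0, by omega⟩ with hi0
  set i1 : Fin n := ⟨1, by omega⟩ with hi1
  have hi01 : i0 ≠ i1 := by
    intro h
    rw [hi0, hi1] at h
    have := Fin.mk.inj_iff.mp h
    omega
  set qA : Fin (ℓ+1) → MvPolynomial (Fin n) A := fun e =>
    (∏ i ∈ Finset.range ((2*s+1)^(e:ℕ)), (X i0 - C ((i:ℕ) : A))) *
    (∏ j ∈ Finset.range ((2*s+1)^ℓ - (2*s+1)^(e:ℕ)), (X i1 - C ((j:ℕ) : A))) with hqA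
  refine ⟨∑ e : Fin (ℓ+1), (qA e) ^ (2*s), ⟨ℓ+1, qA, rfl⟩, ?_⟩
  rintro ⟨g, hg⟩
  -- get the semireal field
  have hA' : ¬ SOS (-1 : A) := by
    intro hsos
    obtain ⟨m, c, hc⟩ := SOS.to_fin_sum hsos
    exact hA m c hc.symm
  obtain ⟨K, fK, φ, hsr⟩ := exists_semireal_field_hom A hA'
  letI := fK
  -- transfer homomorphism
  set Θ : MvPolynomial (Fin n) A →+* Polynomial (Polynomial K) :=
    MvPolynomial.eval₂Hom ((Polynomial.C).comp ((Polynomial.C).comp φ))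
      (fun i => if i = i0 then Polynomial.C Polynomial.X
        else if i = i1 then Polynomial.X else 0) with hΘ
  have hΘX0 : Θ (X i0) = Polynomial.C Polynomial.X := by
    rw [hΘ, MvPolynomial.eval₂Hom_X']
    rw [if_pos rfl]
  have hΘX1 : Θ (X i1) = Polynomial.X := by
    rw [hΘ, MvPolynomial.eval₂Hom_X']
    rw [if_neg (Ne.symm hi01), if_pos rfl]
  have hΘC : ∀ m : ℕ, Θ (C ((m:ℕ) : A)) = Polynomial.C (Polynomial.C ((m:ℕ) : K)) := by
    intro m
    rw [hΘ, MvPolynomial.eval₂Hom_C]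
    simp only [RingHom.coe_comp, Function.comp_apply]
    rw [map_natCast φ]
  have hΘq : ∀ e : Fin (ℓ+1), Θ (qA e)
      = Polynomial.C (Px (K := K) ((2*s+1)^(e:ℕ)))
        * Qy 0 ((2*s+1)^ℓ - (2*s+1)^(e:ℕ)) := by
    intro e
    rw [hqA]
    simp only
    rw [map_mul, map_prod, map_prod]
    congr 1
    · rw [Px, map_prod]
      refine Finset.prod_congr rfl fun i _ => ?_
      rw [map_sub, hΘX0, hΘC i, ← Polynomial.C_sub]
    · rw [Qy]
      refine Finset.prod_congr rfl fun j _ => ?_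
      rw [map_sub, hΘX1, hΘC j]
      have h0j : ((0 + j : ℕ) : K) = ((j : ℕ) : K) := by norm_num
      rw [h0j]
  have hrep : ∑ j, (Θ (g j)) ^ (2*s)
      = ∑ e : Fin (ℓ+1), (Polynomial.C (Px (K := K) ((2*s+1)^(e:ℕ)))
          * Qy 0 ((2*s+1)^ℓ - (2*s+1)^(e:ℕ))) ^ (2*s) := by
    have h1 := congrArg Θ hg
    rw [map_sum, map_sum] at h1
    simp only [map_pow] at h1
    rw [← h1]
    refine Finset.sum_congr rfl fun e _ => ?_
    rw [hΘq e]
  exact main_contra hsr hs hℓ (fun j => Θ (g j)) hrep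
end

section
/- For every positive integer d there exist binary forms p_1, p_2, p_3, p_4 ∈ ℝ[x,y] of degree d such that every binary form of degree 4d lies in the degree-4d component of the ideal generated by p_1³, p_2³, p_3³, p_4³; that is, every homogeneous polynomial of degree 4d in ℝ[x,y] is an ℝ-linear combination of products p_i³·h with 1 ≤ i ≤ 4 and h a binary form of degree d. -/
open MvPolynomial

private noncomputable def Mspan (d : ℕ) (p : Fin 4 → MvPolynomial (Fin 2) ℝ) :
    Submodule ℝ (MvPolynomial (Fin 2) ℝ) where
  carrier := {f | ∃ h : Fin 4 → MvPolynomial (Fin 2) ℝ,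
    (∀ i, (h i).IsHomogeneous d) ∧ f = ∑ i, p i ^ 3 * h i}
  zero_mem' := ⟨0, fun _ => isHomogeneous_zero _ _ _, by simp⟩
  add_mem' := by
    rintro a b ⟨h1, H1, rfl⟩ ⟨h2, H2, rfl⟩
    exact ⟨h1 + h2, fun i => (H1 i).add (H2 i),
      by simp [mul_add, Finset.sum_add_distrib]⟩
  smul_mem' := by
    rintro c a ⟨h, H, rfl⟩
    refine ⟨fun i => C c * h i, fun i => ?_, ?_⟩
    · simpa using (isHomogeneous_C _ c).mul (H i)
    · rw [Finset.smul_sum]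
      refine Finset.sum_congr rfl fun i _ => ?_
      rw [smul_eq_C_mul]; ring

private lemma inv_six_mem (d : ℕ) (p : Fin 4 → MvPolynomial (Fin 2) ℝ)
    (z : MvPolynomial (Fin 2) ℝ) (hz : (6:ℝ) • z ∈ Mspan d p) : z ∈ Mspan d p := by
  have := (Mspan d p).smul_mem ((6:ℝ)⁻¹) hz
  rwa [smul_smul, show ((6:ℝ)⁻¹ * 6) = 1 by norm_num, one_smul] at this

private lemma combos_mem (d : ℕ) (w : MvPolynomial (Fin 2) ℝ) (hw : w.IsHomogeneous d) :
    ∀ z ∈ ({(X 0 ^ d : MvPolynomial (Fin 2) ℝ) ^ 3 * w, (X 1 ^ d) ^ 3 * w,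
      (X 0 ^ d) * (X 1 ^ d) ^ 2 * w, (X 0 ^ d) ^ 2 * (X 1 ^ d) * w} : Set _),
      z ∈ Mspan d ![X 0 ^ d, X 1 ^ d, X 0 ^ d + X 1 ^ d, X 0 ^ d - X 1 ^ d] := by
  set u : MvPolynomial (Fin 2) ℝ := X 0 ^ d with hu
  set v : MvPolynomial (Fin 2) ℝ := X 1 ^ d with hv
  have h0 : (0 : MvPolynomial (Fin 2) ℝ).IsHomogeneous d := isHomogeneous_zero _ _ _
  have hw2 : (-(2 * w)).IsHomogeneous d := by
    have : ((2:MvPolynomial (Fin 2) ℝ) * w).IsHomogeneous d := by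
      simpa only [zero_add, show ((C (2:ℝ)) : MvPolynomial (Fin 2) ℝ) = 2 from map_ofNat _ 2] using
        ((isHomogeneous_C (Fin 2) (2:ℝ)).mul hw)
    simpa using this.neg
  have hwn : (-w).IsHomogeneous d := hw.neg
  rintro z (rfl | rfl | rfl | rfl)
  · exact ⟨![w, 0, 0, 0], by intro i; fin_cases i <;> simpa, by
      simp [Fin.sum_univ_four]⟩
  · exact ⟨![0, w, 0, 0], by intro i; fin_cases i <;> simpa, by
      simp [Fin.sum_univ_four]⟩
  · refine inv_six_mem d _ _ ⟨![-(2*w), 0, w, w], by intro i; fin_cases i <;> simpa, ?_⟩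
    simp only [Fin.sum_univ_four, Matrix.cons_val_zero, Matrix.cons_val_one, Matrix.head_cons,
      Matrix.cons_val_two, Matrix.cons_val_three, Matrix.tail_cons, smul_eq_C_mul]
    rw [show ((C (6:ℝ)) : MvPolynomial (Fin 2) ℝ) = 6 from map_ofNat _ 6]
    ring
  · refine inv_six_mem d _ _ ⟨![0, -(2*w), w, -w], by intro i; fin_cases i <;> simpa, ?_⟩
    simp only [Fin.sum_univ_four, Matrix.cons_val_zero, Matrix.cons_val_one, Matrix.head_cons,
      Matrix.cons_val_two, Matrix.cons_val_three, Matrix.tail_cons, smul_eq_C_mul]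
    rw [show ((C (6:ℝ)) : MvPolynomial (Fin 2) ℝ) = 6 from map_ofNat _ 6]
    ring

private lemma monomial_mem (d a b : ℕ) (hab : a + b = 4 * d) :
    (X 0 : MvPolynomial (Fin 2) ℝ) ^ a * X 1 ^ b ∈
      Mspan d ![X 0 ^ d, X 1 ^ d, X 0 ^ d + X 1 ^ d, X 0 ^ d - X 1 ^ d] := by
  have key : ∀ j, j ≤ d → ((X 0 : MvPolynomial (Fin 2) ℝ) ^ j * X 1 ^ (d - j)).IsHomogeneous d := by
    intro j hj
    have := ((isHomogeneous_X ℝ (0 : Fin 2)).pow j).mul ((isHomogeneous_X ℝ (1 : Fin 2)).pow (d - j))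
    simpa [Nat.add_sub_cancel' hj] using this
  by_cases h1 : a ≤ d
  · have hb : b = d * 3 + (d - a) := by omega
    have he : (X 0 : MvPolynomial (Fin 2) ℝ) ^ a * X 1 ^ b
        = (X 1 ^ d) ^ 3 * (X 0 ^ a * X 1 ^ (d - a)) := by rw [hb]; ring
    rw [he]; exact combos_mem d _ (key a h1) _ (by simp)
  · by_cases h2 : a ≤ 2 * d
    · have ha : a = d + (a - d) := by omega
      have hb : b = d * 2 + (d - (a - d)) := by omega
      have he : (X 0 : MvPolynomial (Fin 2) ℝ) ^ a * X 1 ^ b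
          = (X 0 ^ d) * (X 1 ^ d) ^ 2 * (X 0 ^ (a - d) * X 1 ^ (d - (a - d))) := by
        rw [hb]; nth_rewrite 1 [ha]; ring
      rw [he]; exact combos_mem d _ (key (a - d) (by omega)) _ (by simp)
    · by_cases h3 : a ≤ 3 * d
      · have ha : a = d * 2 + (a - 2 * d) := by omega
        have hb : b = d + (d - (a - 2 * d)) := by omega
        have he : (X 0 : MvPolynomial (Fin 2) ℝ) ^ a * X 1 ^ b
            = (X 0 ^ d) ^ 2 * (X 1 ^ d) * (X 0 ^ (a - 2 * d) * X 1 ^ (d - (a - 2 * d))) := by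
          rw [hb]; nth_rewrite 1 [ha]; ring
        rw [he]; exact combos_mem d _ (key (a - 2 * d) (by omega)) _ (by simp)
      · have ha : a = d * 3 + (a - 3 * d) := by omega
        have hb : b = d - (a - 3 * d) := by omega
        have he : (X 0 : MvPolynomial (Fin 2) ℝ) ^ a * X 1 ^ b
            = (X 0 ^ d) ^ 3 * (X 0 ^ (a - 3 * d) * X 1 ^ (d - (a - 3 * d))) := by
          rw [hb]; nth_rewrite 1 [ha]; ring
        rw [he]; exact combos_mem d _ (key (a - 3 * d) (by omega)) _ (by simp)

/-- For every `d > 0` there are binary forms `p₁, p₂, p₃, p₄` of degree `d` such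
that every binary form of degree `4d` is an `ℝ`-linear combination of products `pᵢ³·h` with
`h` a binary form of degree `d`, i.e. it can be written as `∑ i, pᵢ³ * hᵢ` with each `hᵢ`
homogeneous of degree `d`. -/
theorem exists_four_forms_cubes_generate (d : ℕ) (hd : 0 < d) :
    ∃ p : Fin 4 → MvPolynomial (Fin 2) ℝ,
      (∀ i, (p i).IsHomogeneous d) ∧
      ∀ f : MvPolynomial (Fin 2) ℝ, f.IsHomogeneous (4 * d) →
        ∃ h : Fin 4 → MvPolynomial (Fin 2) ℝ,
          (∀ i, (h i).IsHomogeneous d) ∧ f = ∑ i, p i ^ 3 * h i := by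
  refine ⟨![X 0 ^ d, X 1 ^ d, X 0 ^ d + X 1 ^ d, X 0 ^ d - X 1 ^ d], ?_, ?_⟩
  · have hu := (isHomogeneous_X ℝ (0 : Fin 2)).pow d
    have hv := (isHomogeneous_X ℝ (1 : Fin 2)).pow d
    rw [one_mul] at hu hv
    intro i; fin_cases i
    · exact hu
    · exact hv
    · exact hu.add hv
    · exact hu.sub hv
  · intro f hf
    suffices h : f ∈ Mspan d ![X 0 ^ d, X 1 ^ d, X 0 ^ d + X 1 ^ d, X 0 ^ d - X 1 ^ d] from h
    rw [← support_sum_monomial_coeff f]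
    refine Submodule.sum_mem _ fun m hm => ?_
    have hdeg : m 0 + m 1 = 4 * d := by
      have h2 := hf (mem_support_iff.mp hm)
      simp only [Finsupp.weight, Finsupp.linearCombination, Pi.one_apply,
        LinearMap.toAddMonoidHom_coe, Finsupp.coe_lsum, Finsupp.sum, LinearMap.coe_smulRight,
        LinearMap.id_coe, id_eq, smul_eq_mul, mul_one] at h2
      rw [Finset.sum_subset (Finset.subset_univ _)
        (fun x _ hx => Finsupp.notMem_support_iff.mp hx), Fin.sum_univ_two] at h2
      exact h2
    have he : (monomial m) (coeff m f)
        = coeff m f • ((X 0 : MvPolynomial (Fin 2) ℝ) ^ (m 0) * X 1 ^ (m 1)) := by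
      rw [smul_eq_C_mul, monomial_eq, Finsupp.prod_fintype _ _ (fun i => pow_zero _),
        Fin.prod_univ_two]
    rw [he]
    exact Submodule.smul_mem _ _ (monomial_mem d (m 0) (m 1) hdeg)
end

section
/- Let L : ℝ[x,y]_8 → ℝ be a linear functional on the space of binary octics and let q_1, q_2 be linearly independent binary quadratic forms that share a common linear factor (i.e., q_1 = l·l_1 and q_2 = l·l_2 for some linear forms l, l_1, l_2 ∈ ℝ[x,y]_1). If L(q_1³·h) = 0 and L(q_2³·h) = 0 for every binary quadratic form h, then there exists a nonzero linear form m ∈ ℝ[x,y]_1 such that L(m³·h') = 0 for every binary form h' of degree 5. -/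
open MvPolynomial

private lemma deg_fin2 (m : Fin 2 →₀ ℕ) : m.degree = m 0 + m 1 := by
  rw [Finsupp.degree, ← Fin.sum_univ_two (fun i => m i)]
  exact Finset.sum_subset (Finset.subset_univ _)
    (fun i _ hi => Finsupp.notMem_support_iff.mp hi)

private lemma homog_deg2 {p : MvPolynomial (Fin 2) ℝ} {n : ℕ} (hp : p.IsHomogeneous n)
    {m : Fin 2 →₀ ℕ} (hc : coeff m p ≠ 0) : m 0 + m 1 = n := by
  have := hp hc
  rw [show (Finsupp.weight 1 : (Fin 2 →₀ ℕ) →+ ℕ) = Finsupp.weight (fun _ => 1) from rfl,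
    ← Finsupp.degree_eq_weight_one, deg_fin2] at this
  exact this

private lemma fin2_ext {m n : Fin 2 →₀ ℕ} (h0 : m 0 = n 0) (h1 : m 1 = n 1) : m = n := by
  ext k; fin_cases k <;> assumption

private lemma homog1_eq (p : MvPolynomial (Fin 2) ℝ) (hp : p.IsHomogeneous 1) :
    p = C (coeff (Finsupp.single 0 1) p) * X 0 + C (coeff (Finsupp.single 1 1) p) * X 1 := by
  ext m
  rw [coeff_add, coeff_C_mul, coeff_C_mul, coeff_X', coeff_X']
  by_cases h0 : Finsupp.single (0 : Fin 2) 1 = m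
  · rw [if_pos h0, if_neg, mul_one, mul_zero, add_zero, h0]
    rw [← h0]
    intro h
    have := DFunLike.congr_fun h (0 : Fin 2)
    simp at this
  · rw [if_neg h0, mul_zero, zero_add]
    by_cases h1 : Finsupp.single (1 : Fin 2) 1 = m
    · rw [if_pos h1, mul_one, h1]
    · rw [if_neg h1, mul_zero]
      by_contra hc
      have hdeg : m 0 + m 1 = 1 := homog_deg2 hp hc
      rcases Nat.eq_zero_or_pos (m 0) with hm0 | hm0
      · exact h1 (fin2_ext (by simp [hm0]) (by simp; omega)).symm
      · exact h0 (fin2_ext (by simp; omega) (by simp; omega)).symm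

/-- Let `L` be a linear functional on binary octics and `q₁ = l·l₁`, `q₂ = l·l₂`
linearly independent binary quadratics with a common linear factor `l`. If `L(q₁³·h) = 0` and
`L(q₂³·h) = 0` for all binary quadratics `h`, then there is a nonzero linear form `m` with
`L(m³·h') = 0` for all binary quintics `h'`. -/
theorem common_factor_cubes_apolar (L : MvPolynomial (Fin 2) ℝ →ₗ[ℝ] ℝ)
    (l l₁ l₂ : MvPolynomial (Fin 2) ℝ)
    (hl : l.IsHomogeneous 1) (hl₁ : l₁.IsHomogeneous 1) (hl₂ : l₂.IsHomogeneous 1)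
    (hind : LinearIndependent ℝ ![l * l₁, l * l₂])
    (h1 : ∀ h : MvPolynomial (Fin 2) ℝ, h.IsHomogeneous 2 → L ((l * l₁) ^ 3 * h) = 0)
    (h2 : ∀ h : MvPolynomial (Fin 2) ℝ, h.IsHomogeneous 2 → L ((l * l₂) ^ 3 * h) = 0) :
    ∃ m : MvPolynomial (Fin 2) ℝ, m ≠ 0 ∧ m.IsHomogeneous 1 ∧
      ∀ h' : MvPolynomial (Fin 2) ℝ, h'.IsHomogeneous 5 → L (m ^ 3 * h') = 0 := by
  -- `l` is nonzero
  have hne1 : l * l₁ ≠ 0 := by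
    have := hind.ne_zero 0
    simpa using this
  have hl0 : l ≠ 0 := left_ne_zero_of_mul hne1
  -- key vanishing fact
  have hKEY : ∀ s t : ℕ, s + t = 5 → L (l ^ 3 * (l₁ ^ s * l₂ ^ t)) = 0 := by
    intro s t hst
    rcases le_or_gt 3 s with hs | hs
    · obtain ⟨k, rfl⟩ := Nat.exists_eq_add_of_le hs
      have hdeg : (l₁ ^ k * l₂ ^ t).IsHomogeneous 2 := by
        have h2' : (l₁ ^ k * l₂ ^ t).IsHomogeneous (1 * k + 1 * t) := (hl₁.pow k).mul (hl₂.pow t)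
        have : 1 * k + 1 * t = 2 := by omega
        rwa [this] at h2'
      have := h1 _ hdeg
      rw [show (l * l₁) ^ 3 * (l₁ ^ k * l₂ ^ t) = l ^ 3 * (l₁ ^ (3 + k) * l₂ ^ t) from by
        ring] at this
      exact this
    · have ht : 3 ≤ t := by omega
      obtain ⟨k, rfl⟩ := Nat.exists_eq_add_of_le ht
      have hdeg : (l₁ ^ s * l₂ ^ k).IsHomogeneous 2 := by
        have h2' : (l₁ ^ s * l₂ ^ k).IsHomogeneous (1 * s + 1 * k) := (hl₁.pow s).mul (hl₂.pow k)
        have : 1 * s + 1 * k = 2 := by omega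
        rwa [this] at h2'
      have := h2 _ hdeg
      rw [show (l * l₂) ^ 3 * (l₁ ^ s * l₂ ^ k) = l ^ 3 * (l₁ ^ s * l₂ ^ (3 + k)) from by
        ring] at this
      exact this
  -- coefficients of l₁ and l₂
  set a := coeff (Finsupp.single 0 1) l₁ with ha
  set b := coeff (Finsupp.single 1 1) l₁ with hb
  set c := coeff (Finsupp.single 0 1) l₂ with hc
  set d := coeff (Finsupp.single 1 1) l₂ with hd
  have e₁ : l₁ = C a * X 0 + C b * X 1 := homog1_eq l₁ hl₁
  have e₂ : l₂ = C c * X 0 + C d * X 1 := homog1_eq l₂ hl₂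
  rw [LinearIndependent.pair_iff] at hind
  have key0 : ∀ s t : ℝ, s * a + t * c = 0 → s * b + t * d = 0 → s = 0 ∧ t = 0 := by
    intro s t hx hy
    apply hind s t
    have hx' : C s * C a + C t * C c = (0 : MvPolynomial (Fin 2) ℝ) := by
      rw [← C_mul, ← C_mul, ← C_add, hx, C_0]
    have hy' : C s * C b + C t * C d = (0 : MvPolynomial (Fin 2) ℝ) := by
      rw [← C_mul, ← C_mul, ← C_add, hy, C_0]
    rw [smul_eq_C_mul, smul_eq_C_mul, e₁, e₂]
    linear_combination (l * X 0) * hx' + (l * X 1) * hy'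
  have hΔ : a * d - b * c ≠ 0 := by
    intro h
    by_cases hac : a = 0 ∧ c = 0
    · have hdb := key0 d (-b) (by rw [hac.1, hac.2]; ring) (by ring)
      have := key0 1 0 (by rw [hac.1, hac.2]; ring)
        (by rw [neg_eq_zero.mp hdb.2]; ring)
      exact one_ne_zero this.1
    · have hca := key0 c (-a) (by ring) (by linear_combination -h)
      exact hac ⟨neg_eq_zero.mp hca.2, hca.1⟩
  set Δ := a * d - b * c with hΔdef
  -- inverse substitution
  set σp : MvPolynomial (Fin 2) ℝ →ₐ[ℝ] MvPolynomial (Fin 2) ℝ :=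
    aeval ![C (d / Δ) * X 0 + C (-b / Δ) * X 1, C (-c / Δ) * X 0 + C (a / Δ) * X 1] with hσp
  set ψ : MvPolynomial (Fin 2) ℝ →ₐ[ℝ] MvPolynomial (Fin 2) ℝ := aeval ![l₁, l₂] with hψ
  have hcomp : ∀ p, ψ (σp p) = p := by
    have heq : ψ.comp σp = AlgHom.id ℝ _ := by
      apply algHom_ext
      intro i
      fin_cases i
      · have hC1 : C (d / Δ) * C a + C (-b / Δ) * C c = (1 : MvPolynomial (Fin 2) ℝ) := by
          rw [← C_mul, ← C_mul, ← C_add, show d / Δ * a + -b / Δ * c = 1 from by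
            field_simp; ring, C_1]
        have hC2 : C (d / Δ) * C b + C (-b / Δ) * C d = (0 : MvPolynomial (Fin 2) ℝ) := by
          rw [← C_mul, ← C_mul, ← C_add, show d / Δ * b + -b / Δ * d = 0 from by
            field_simp; ring, C_0]
        show ψ (σp (X 0)) = X 0
        rw [hσp, hψ]
        simp only [aeval_X, Matrix.cons_val_zero, Matrix.cons_val_one, Matrix.head_cons,
          map_add, map_mul, aeval_C, algebraMap_eq]
        rw [e₁, e₂]
        linear_combination (X 0 : MvPolynomial (Fin 2) ℝ) * hC1 + (X 1 : MvPolynomial (Fin 2) ℝ) * hC2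
      · have hC1 : C (-c / Δ) * C a + C (a / Δ) * C c = (0 : MvPolynomial (Fin 2) ℝ) := by
          rw [← C_mul, ← C_mul, ← C_add, show -c / Δ * a + a / Δ * c = 0 from by
            field_simp; ring, C_0]
        have hC2 : C (-c / Δ) * C b + C (a / Δ) * C d = (1 : MvPolynomial (Fin 2) ℝ) := by
          rw [← C_mul, ← C_mul, ← C_add, show -c / Δ * b + a / Δ * d = 1 from by
            field_simp; ring, C_1]
        show ψ (σp (X 1)) = X 1
        rw [hσp, hψ]
        simp only [aeval_X, Matrix.cons_val_zero, Matrix.cons_val_one, Matrix.head_cons,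
          map_add, map_mul, aeval_C, algebraMap_eq]
        rw [e₁, e₂]
        linear_combination (X 0 : MvPolynomial (Fin 2) ℝ) * hC1 + (X 1 : MvPolynomial (Fin 2) ℝ) * hC2
    intro p
    exact DFunLike.congr_fun heq p
  refine ⟨l, hl0, hl, ?_⟩
  intro h' hh'
  set p := σp h' with hpdef
  have hph : p.IsHomogeneous 5 := by
    have := hh'.aeval (![C (d / Δ) * X 0 + C (-b / Δ) * X 1, C (-c / Δ) * X 0 + C (a / Δ) * X 1] :
        Fin 2 → MvPolynomial (Fin 2) ℝ)
      (fun i => by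
        fin_cases i
        · exact (isHomogeneous_C_mul_X (d / Δ) 0).add (isHomogeneous_C_mul_X (-b / Δ) 1)
        · exact (isHomogeneous_C_mul_X (-c / Δ) 0).add (isHomogeneous_C_mul_X (a / Δ) 1))
    rw [hpdef, hσp]
    simpa only [one_mul] using this
  have hrepr : h' = ψ p := (hcomp h').symm
  have hsum : ψ p = ∑ v ∈ p.support, (coeff v p) • (l₁ ^ v 0 * l₂ ^ v 1) := by
    conv_lhs => rw [p.as_sum]
    rw [map_sum]
    apply Finset.sum_congr rfl
    intro v _
    rw [hψ, aeval_monomial, Finsupp.prod_pow, Fin.prod_univ_two]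
    simp [smul_eq_C_mul, algebraMap_eq]
  rw [hrepr, hsum, Finset.mul_sum, map_sum]
  apply Finset.sum_eq_zero
  intro v hv
  rw [mul_smul_comm, map_smul, hKEY (v 0) (v 1) (homog_deg2 hph (mem_support_iff.mp hv)),
    smul_zero]
end

section
/- Let L : ℝ[x,y]_8 → ℝ be a nonzero linear functional on the space of binary octics satisfying L(q⁴) ≥ 0 for every binary quadratic form q. If p ∈ ℝ[x,y]_2 is a definite binary quadratic form, i.e. p(x,y) ≠ 0 for every (x,y) ∈ ℝ² \ {(0,0)}, then L(p⁴) > 0. -/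
set_option maxHeartbeats 1000000
open MvPolynomial

abbrev R2 := MvPolynomial (Fin 2) ℝ

lemma deg2 (d : Fin 2 →₀ ℕ) : d.degree = d 0 + d 1 := by
  rw [Finsupp.degree_apply, Finset.sum_subset (Finset.subset_univ _)
    (fun i _ hi => Finsupp.notMem_support_iff.mp hi), Fin.sum_univ_two]

lemma prodX (s : Fin 2 →₀ ℕ) : (s.prod fun i e => (X i : R2) ^ e) = X 0 ^ s 0 * X 1 ^ s 1 := by
  rw [Finsupp.prod_fintype _ _ (fun i => pow_zero _), Fin.prod_univ_two]

lemma L_C_mul (L : R2 →ₗ[ℝ] ℝ) (r : ℝ) (g : R2) : L (C r * g) = r * L g := by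
  rw [← smul_eq_C_mul, map_smul, smul_eq_mul]

lemma ident1260 (u v : R2) : (1260:R2) * (u^2+v^2)^4 =
    702*(u^8 + v^8) + 22*((u+v)^8 + (u-v)^8)
      + (2*u+v)^8 + (u+2*v)^8 + (2*u-v)^8 + (u-2*v)^8 := by ring
lemma ident1260' (u v : R2) : (1260:ℝ) • ((u^2+v^2)^4) =
    (702:ℝ) • (u^8 + v^8) + (22:ℝ) • ((u+v)^8 + (u-v)^8)
      + (2*u+v)^8 + (u+2*v)^8 + (2*u-v)^8 + (u-2*v)^8 := by
  simp only [smul_eq_C_mul, map_ofNat]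
  ring
lemma Lmono (L : R2 →ₗ[ℝ] ℝ) (hT : ∀ t : ℝ, L ((X 0 + C t * X 1) ^ 8) = 0) :
    ∀ i j : ℕ, i + j = 8 → L ((X 0 : R2) ^ i * X 1 ^ j) = 0 := by
  have hw0 : L ((X 0 : R2) ^ 8) = 0 := by have := hT 0; simpa using this
  have hwp1 : L (((X 0 : R2) + X 1) ^ 8) = 0 := by
    have := hT 1; simpa using this
  have hwm1 : L (((X 0 : R2) - X 1) ^ 8) = 0 := by
    have := hT (-1)
    simp only [map_neg, map_one, neg_mul, one_mul, ← sub_eq_add_neg] at this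
    exact this
  have hwp2 : L (((X 0 : R2) + 2 * X 1) ^ 8) = 0 := by
    have := hT 2; simp only [map_ofNat] at this; exact this
  have hwm2 : L (((X 0 : R2) - 2 * X 1) ^ 8) = 0 := by
    have := hT (-2)
    simp only [map_neg, map_ofNat, neg_mul, ← sub_eq_add_neg] at this
    exact this
  have hwp3 : L (((X 0 : R2) + 3 * X 1) ^ 8) = 0 := by
    have := hT 3; simp only [map_ofNat] at this; exact this
  have hwm3 : L (((X 0 : R2) - 3 * X 1) ^ 8) = 0 := by
    have := hT (-3)
    simp only [map_neg, map_ofNat, neg_mul, ← sub_eq_add_neg] at this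
    exact this
  have hwp4 : L (((X 0 : R2) + 4 * X 1) ^ 8) = 0 := by
    have := hT 4; simp only [map_ofNat] at this; exact this
  have hwm4 : L (((X 0 : R2) - 4 * X 1) ^ 8) = 0 := by
    have := hT (-4)
    simp only [map_neg, map_ofNat, neg_mul, ← sub_eq_add_neg] at this
    exact this
  intro i j hij
  have hj8 : j ≤ 8 := by omega
  interval_cases j
  · obtain rfl : i = 8 := by omega
    simpa using hw0
  · obtain rfl : i = 7 := by omega
    have e : (6720 : ℝ) • ((X 0 : R2) ^ 7 * X 1 ^ 1) = (3 : ℝ) • ((X 0 : R2) - 4 * X 1) ^ 8 + (-32 : ℝ) • ((X 0 : R2) - 3 * X 1) ^ 8 + (168 : ℝ) • ((X 0 : R2) - 2 * X 1) ^ 8 + (-672 : ℝ) • ((X 0 : R2) - X 1) ^ 8 + (672 : ℝ) • ((X 0 : R2) + X 1) ^ 8 + (-168 : ℝ) • ((X 0 : R2) + 2 * X 1) ^ 8 + (32 : ℝ) • ((X 0 : R2) + 3 * X 1) ^ 8 + (-3 : ℝ) • ((X 0 : R2) + 4 * X 1) ^ 8 := by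
      simp only [smul_eq_C_mul, map_neg, map_ofNat, map_one]
      ring
    have h' := congrArg L e
    simp only [map_add, map_smul, hw0, hwp1, hwm1, hwp2, hwm2, hwp3, hwm3, hwp4, hwm4,
      smul_zero, add_zero, zero_add, smul_eq_mul] at h'
    linarith

  · obtain rfl : i = 6 := by omega
    have e : (282240 : ℝ) • ((X 0 : R2) ^ 6 * X 1 ^ 2) = (-9 : ℝ) • ((X 0 : R2) - 4 * X 1) ^ 8 + (128 : ℝ) • ((X 0 : R2) - 3 * X 1) ^ 8 + (-1008 : ℝ) • ((X 0 : R2) - 2 * X 1) ^ 8 + (8064 : ℝ) • ((X 0 : R2) - X 1) ^ 8 + (-14350 : ℝ) • (X 0 : R2) ^ 8 + (8064 : ℝ) • ((X 0 : R2) + X 1) ^ 8 + (-1008 : ℝ) • ((X 0 : R2) + 2 * X 1) ^ 8 + (128 : ℝ) • ((X 0 : R2) + 3 * X 1) ^ 8 + (-9 : ℝ) • ((X 0 : R2) + 4 * X 1) ^ 8 := by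
      simp only [smul_eq_C_mul, map_neg, map_ofNat, map_one]
      ring
    have h' := congrArg L e
    simp only [map_add, map_smul, hw0, hwp1, hwm1, hwp2, hwm2, hwp3, hwm3, hwp4, hwm4,
      smul_zero, add_zero, zero_add, smul_eq_mul] at h'
    linarith

  · obtain rfl : i = 5 := by omega
    have e : (80640 : ℝ) • ((X 0 : R2) ^ 5 * X 1 ^ 3) = (-7 : ℝ) • ((X 0 : R2) - 4 * X 1) ^ 8 + (72 : ℝ) • ((X 0 : R2) - 3 * X 1) ^ 8 + (-338 : ℝ) • ((X 0 : R2) - 2 * X 1) ^ 8 + (488 : ℝ) • ((X 0 : R2) - X 1) ^ 8 + (-488 : ℝ) • ((X 0 : R2) + X 1) ^ 8 + (338 : ℝ) • ((X 0 : R2) + 2 * X 1) ^ 8 + (-72 : ℝ) • ((X 0 : R2) + 3 * X 1) ^ 8 + (7 : ℝ) • ((X 0 : R2) + 4 * X 1) ^ 8 := by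
      simp only [smul_eq_C_mul, map_neg, map_ofNat, map_one]
      ring
    have h' := congrArg L e
    simp only [map_add, map_smul, hw0, hwp1, hwm1, hwp2, hwm2, hwp3, hwm3, hwp4, hwm4,
      smul_zero, add_zero, zero_add, smul_eq_mul] at h'
    linarith

  · obtain rfl : i = 4 := by omega
    have e : (403200 : ℝ) • ((X 0 : R2) ^ 4 * X 1 ^ 4) = (7 : ℝ) • ((X 0 : R2) - 4 * X 1) ^ 8 + (-96 : ℝ) • ((X 0 : R2) - 3 * X 1) ^ 8 + (676 : ℝ) • ((X 0 : R2) - 2 * X 1) ^ 8 + (-1952 : ℝ) • ((X 0 : R2) - X 1) ^ 8 + (2730 : ℝ) • (X 0 : R2) ^ 8 + (-1952 : ℝ) • ((X 0 : R2) + X 1) ^ 8 + (676 : ℝ) • ((X 0 : R2) + 2 * X 1) ^ 8 + (-96 : ℝ) • ((X 0 : R2) + 3 * X 1) ^ 8 + (7 : ℝ) • ((X 0 : R2) + 4 * X 1) ^ 8 := by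
      simp only [smul_eq_C_mul, map_neg, map_ofNat, map_one]
      ring
    have h' := congrArg L e
    simp only [map_add, map_smul, hw0, hwp1, hwm1, hwp2, hwm2, hwp3, hwm3, hwp4, hwm4,
      smul_zero, add_zero, zero_add, smul_eq_mul] at h'
    linarith

  · obtain rfl : i = 3 := by omega
    have e : (40320 : ℝ) • ((X 0 : R2) ^ 3 * X 1 ^ 5) = (1 : ℝ) • ((X 0 : R2) - 4 * X 1) ^ 8 + (-9 : ℝ) • ((X 0 : R2) - 3 * X 1) ^ 8 + (26 : ℝ) • ((X 0 : R2) - 2 * X 1) ^ 8 + (-29 : ℝ) • ((X 0 : R2) - X 1) ^ 8 + (29 : ℝ) • ((X 0 : R2) + X 1) ^ 8 + (-26 : ℝ) • ((X 0 : R2) + 2 * X 1) ^ 8 + (9 : ℝ) • ((X 0 : R2) + 3 * X 1) ^ 8 + (-1 : ℝ) • ((X 0 : R2) + 4 * X 1) ^ 8 := by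
      simp only [smul_eq_C_mul, map_neg, map_ofNat, map_one]
      ring
    have h' := congrArg L e
    simp only [map_add, map_smul, hw0, hwp1, hwm1, hwp2, hwm2, hwp3, hwm3, hwp4, hwm4,
      smul_zero, add_zero, zero_add, smul_eq_mul] at h'
    linarith

  · obtain rfl : i = 2 := by omega
    have e : (80640 : ℝ) • ((X 0 : R2) ^ 2 * X 1 ^ 6) = (-1 : ℝ) • ((X 0 : R2) - 4 * X 1) ^ 8 + (12 : ℝ) • ((X 0 : R2) - 3 * X 1) ^ 8 + (-52 : ℝ) • ((X 0 : R2) - 2 * X 1) ^ 8 + (116 : ℝ) • ((X 0 : R2) - X 1) ^ 8 + (-150 : ℝ) • (X 0 : R2) ^ 8 + (116 : ℝ) • ((X 0 : R2) + X 1) ^ 8 + (-52 : ℝ) • ((X 0 : R2) + 2 * X 1) ^ 8 + (12 : ℝ) • ((X 0 : R2) + 3 * X 1) ^ 8 + (-1 : ℝ) • ((X 0 : R2) + 4 * X 1) ^ 8 := by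
      simp only [smul_eq_C_mul, map_neg, map_ofNat, map_one]
      ring
    have h' := congrArg L e
    simp only [map_add, map_smul, hw0, hwp1, hwm1, hwp2, hwm2, hwp3, hwm3, hwp4, hwm4,
      smul_zero, add_zero, zero_add, smul_eq_mul] at h'
    linarith

  · obtain rfl : i = 1 := by omega
    have e : (80640 : ℝ) • ((X 0 : R2) ^ 1 * X 1 ^ 7) = (-1 : ℝ) • ((X 0 : R2) - 4 * X 1) ^ 8 + (6 : ℝ) • ((X 0 : R2) - 3 * X 1) ^ 8 + (-14 : ℝ) • ((X 0 : R2) - 2 * X 1) ^ 8 + (14 : ℝ) • ((X 0 : R2) - X 1) ^ 8 + (-14 : ℝ) • ((X 0 : R2) + X 1) ^ 8 + (14 : ℝ) • ((X 0 : R2) + 2 * X 1) ^ 8 + (-6 : ℝ) • ((X 0 : R2) + 3 * X 1) ^ 8 + (1 : ℝ) • ((X 0 : R2) + 4 * X 1) ^ 8 := by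
      simp only [smul_eq_C_mul, map_neg, map_ofNat, map_one]
      ring
    have h' := congrArg L e
    simp only [map_add, map_smul, hw0, hwp1, hwm1, hwp2, hwm2, hwp3, hwm3, hwp4, hwm4,
      smul_zero, add_zero, zero_add, smul_eq_mul] at h'
    linarith

  · obtain rfl : i = 0 := by omega
    have e : (40320 : ℝ) • ((X 0 : R2) ^ 0 * X 1 ^ 8) = (1 : ℝ) • ((X 0 : R2) - 4 * X 1) ^ 8 + (-8 : ℝ) • ((X 0 : R2) - 3 * X 1) ^ 8 + (28 : ℝ) • ((X 0 : R2) - 2 * X 1) ^ 8 + (-56 : ℝ) • ((X 0 : R2) - X 1) ^ 8 + (70 : ℝ) • (X 0 : R2) ^ 8 + (-56 : ℝ) • ((X 0 : R2) + X 1) ^ 8 + (28 : ℝ) • ((X 0 : R2) + 2 * X 1) ^ 8 + (-8 : ℝ) • ((X 0 : R2) + 3 * X 1) ^ 8 + (1 : ℝ) • ((X 0 : R2) + 4 * X 1) ^ 8 := by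
      simp only [smul_eq_C_mul, map_neg, map_ofNat, map_one]
      ring
    have h' := congrArg L e
    simp only [map_add, map_smul, hw0, hwp1, hwm1, hwp2, hwm2, hwp3, hwm3, hwp4, hwm4,
      smul_zero, add_zero, zero_add, smul_eq_mul] at h'
    linarith

lemma span8 (L : R2 →ₗ[ℝ] ℝ) (h : ∀ A B : ℝ, L ((C A * X 0 + C B * X 1)^8) = 0)
    {f : R2} (hf : f.IsHomogeneous 8) : L f = 0 := by
  have hT : ∀ t : ℝ, L ((X 0 + C t * X 1)^8) = 0 := by
    intro t; have := h 1 t; rwa [map_one, one_mul] at this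
  have hm := Lmono L hT
  rw [← f.support_sum_monomial_coeff, map_sum]
  apply Finset.sum_eq_zero
  intro d hd
  have hdeg : d 0 + d 1 = 8 := by
    rw [← deg2, Finsupp.degree_eq_weight_one]
    exact hf (mem_support_iff.mp hd)
  rw [monomial_eq, prodX, L_C_mul, hm _ _ hdeg, mul_zero]
lemma main_aux (L : R2 →ₗ[ℝ] ℝ)
    (hL : ∀ q : R2, q.IsHomogeneous 2 → 0 ≤ L (q ^ 4))
    (p : R2) (hp : p.IsHomogeneous 2)
    (hdef : ∀ v : Fin 2 → ℝ, v ≠ 0 → eval v p ≠ 0)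
    (hz : L (p ^ 4) = 0)
    (hpos : 0 < eval ![(1:ℝ), 0] p) :
    ∀ A B : ℝ, L ((C A * X 0 + C B * X 1) ^ 8) = 0 := by
  classical
  -- the exponent finsupps
  set sf : ℕ → ℕ → (Fin 2 →₀ ℕ) := fun i j => Finsupp.single 0 i + Finsupp.single 1 j with hsf
  have hsf0 : ∀ i j, (sf i j) 0 = i := by intro i j; simp [hsf, Finsupp.single_apply]
  have hsf1 : ∀ i j, (sf i j) 1 = j := by intro i j; simp [hsf, Finsupp.single_apply]
  have hsf_eq : ∀ m : Fin 2 →₀ ℕ, m = sf (m 0) (m 1) := by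
    intro m; ext k; fin_cases k
    · simp [hsf, Finsupp.single_apply]
    · simp [hsf, Finsupp.single_apply]
  have hne : ∀ i j i' j' : ℕ, i ≠ i' → sf i j ≠ sf i' j' := by
    intro i j i' j' hii h
    exact hii (by rw [← hsf0 i j, ← hsf0 i' j', h])
  set a := coeff (sf 2 0) p with hadef
  set b := coeff (sf 1 1) p with hbdef
  set c := coeff (sf 0 2) p with hcdef
  have pm : p = monomial (sf 2 0) a + monomial (sf 1 1) b + monomial (sf 0 2) c := by
    ext m
    simp only [coeff_add, coeff_monomial]
    by_cases hm : m 0 + m 1 = 2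
    · have hcases : (m 0 = 2 ∧ m 1 = 0) ∨ (m 0 = 1 ∧ m 1 = 1) ∨ (m 0 = 0 ∧ m 1 = 2) := by omega
      have hmeq := hsf_eq m
      rcases hcases with ⟨h0, h1⟩ | ⟨h0, h1⟩ | ⟨h0, h1⟩ <;> rw [h0, h1] at hmeq <;> rw [hmeq]
      · rw [if_pos rfl, if_neg (hne 1 1 2 0 (by omega)), if_neg (hne 0 2 2 0 (by omega))]
        simp [hadef]
      · rw [if_neg (hne 2 0 1 1 (by omega)), if_pos rfl, if_neg (hne 0 2 1 1 (by omega))]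
        simp [hbdef]
      · rw [if_neg (hne 2 0 0 2 (by omega)), if_neg (hne 1 1 0 2 (by omega)), if_pos rfl]
        simp [hcdef]
    · have hz0 : coeff m p = 0 := hp.coeff_eq_zero (by rw [deg2]; omega)
      rw [hz0, if_neg, if_neg, if_neg]
      · simp
      · intro h; apply hm; rw [← h, hsf0, hsf1]
      · intro h; apply hm; rw [← h, hsf0, hsf1]
      · intro h; apply hm; rw [← h, hsf0, hsf1]
  have hp2 : p = C a * X 0 ^ 2 + C b * (X 0 * X 1) + C c * X 1 ^ 2 := by
    rw [pm, monomial_eq, monomial_eq, monomial_eq, prodX, prodX, prodX,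
      hsf0, hsf0, hsf0, hsf1, hsf1, hsf1]
    ring
  have ha : 0 < a := by
    have : eval ![(1:ℝ), 0] p = a := by simp [hp2]
    linarith [this ▸ hpos]
  have hquad : ∀ t : ℝ, a * t ^ 2 + b * t + c ≠ 0 := by
    intro t heq
    have hv : ![t, (1:ℝ)] ≠ 0 := by
      intro hv; have := congrFun hv 1; simp at this
    apply hdef ![t, 1] hv
    have : eval ![t, (1:ℝ)] p = a * t ^ 2 + b * t + c := by simp [hp2]
    rw [this]; exact heq
  have hdisc : b ^ 2 - 4 * (a * c) < 0 := by
    by_contra hge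
    push_neg at hge
    set s := Real.sqrt (b ^ 2 - 4 * (a * c)) with hsdef
    have hs : s ^ 2 = b ^ 2 - 4 * (a * c) := Real.sq_sqrt (by linarith)
    apply hquad ((-b + s) / (2 * a))
    have ha0 : a ≠ 0 := ne_of_gt ha
    field_simp
    nlinarith [hs]
  -- square-root data
  set sa := Real.sqrt a with hsadef
  have hsa : sa ^ 2 = a := Real.sq_sqrt (le_of_lt ha)
  have hsa0 : 0 < sa := Real.sqrt_pos.mpr ha
  have hDpos : 0 < (4 * (a * c) - b ^ 2) / (4 * a) := by
    apply div_pos (by linarith) (by linarith)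
  set g := Real.sqrt ((4 * (a * c) - b ^ 2) / (4 * a)) with hgdef
  have hg2 : g ^ 2 = (4 * (a * c) - b ^ 2) / (4 * a) := Real.sq_sqrt (le_of_lt hDpos)
  have hg0 : 0 < g := Real.sqrt_pos.mpr hDpos
  set b' := b / (2 * sa) with hb'def
  set l : R2 := C sa * X 0 + C b' * X 1 with hldef
  set m : R2 := C g * X 1 with hmdef
  have e1 : sa ^ 2 = a := hsa
  have e2 : 2 * (sa * b') = b := by
    rw [hb'def]; field_simp
  have e3 : b' ^ 2 + g ^ 2 = c := by
    have hb'2 : b' ^ 2 = b ^ 2 / (4 * a) := by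
      rw [hb'def, div_pow, show (2 * sa) ^ 2 = 4 * a by rw [mul_pow, hsa]; ring]
    rw [hb'2, hg2]
    field_simp
    ring
  have hp_lm : p = l ^ 2 + m ^ 2 := by
    have expand : l ^ 2 + m ^ 2
        = C (sa ^ 2) * X 0 ^ 2 + C (2 * (sa * b')) * (X 0 * X 1) + C (b' ^ 2 + g ^ 2) * X 1 ^ 2 := by
      simp only [hldef, hmdef, map_add, map_mul, map_pow, map_ofNat]
      ring
    rw [expand, e1, e2, e3, ← hp2]
  -- homogeneity
  have hCmul : ∀ (r : ℝ) (w : R2), w.IsHomogeneous 1 → (C r * w).IsHomogeneous 1 := by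
    intro r w hw
    simpa using (isHomogeneous_C _ r).mul hw
  have hlh : l.IsHomogeneous 1 := by
    rw [hldef]
    exact (hCmul sa _ (isHomogeneous_X _ 0)).add (hCmul b' _ (isHomogeneous_X _ 1))
  have hmh : m.IsHomogeneous 1 := by
    rw [hmdef]; exact hCmul g _ (isHomogeneous_X _ 1)
  have L8 : ∀ w : R2, w.IsHomogeneous 1 → 0 ≤ L (w ^ 8) := by
    intro w hw
    have h2 : (w ^ 2).IsHomogeneous 2 := by simpa using hw.pow 2
    have := hL _ h2
    rwa [show ((w ^ 2 : R2) ^ 4) = w ^ 8 from by ring] at this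
  -- main argument
  intro A B
  set α := A / sa with hαdef
  set β := (B - α * b') / g with hβdef
  set u : R2 := C α * l + C β * m with hudef
  set v : R2 := C (-β) * l + C α * m with hvdef
  have huh : u.IsHomogeneous 1 := by
    rw [hudef]; exact (hCmul α _ hlh).add (hCmul β _ hmh)
  have hvh : v.IsHomogeneous 1 := by
    rw [hvdef]; exact (hCmul (-β) _ hlh).add (hCmul α _ hmh)
  have huv : u ^ 2 + v ^ 2 = C (α ^ 2 + β ^ 2) * p := by
    rw [hp_lm, hudef, hvdef]
    simp only [map_add, map_neg, map_pow]
    ring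
  have huv4 : (u ^ 2 + v ^ 2) ^ 4 = C ((α ^ 2 + β ^ 2) ^ 4) * p ^ 4 := by
    rw [huv, mul_pow, ← map_pow]
  have hE := ident1260' u v
  rw [huv4] at hE
  have hEL := congrArg L hE
  simp only [map_smul, map_add, smul_eq_mul, L_C_mul, hz, mul_zero] at hEL
  have N1 := L8 u huh
  have N2 := L8 v hvh
  have N3 := L8 (u + v) (huh.add hvh)
  have N4 := L8 (u - v) (huh.sub hvh)
  have N5 : 0 ≤ L ((2 * u + v) ^ 8) := by
    rw [two_mul]; exact L8 _ ((huh.add huh).add hvh)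
  have N6 : 0 ≤ L ((u + 2 * v) ^ 8) := by
    rw [two_mul]; exact L8 _ (huh.add (hvh.add hvh))
  have N7 : 0 ≤ L ((2 * u - v) ^ 8) := by
    rw [two_mul]; exact L8 _ ((huh.add huh).sub hvh)
  have N8 : 0 ≤ L ((u - 2 * v) ^ 8) := by
    rw [two_mul]; exact L8 _ (huh.sub (hvh.add hvh))
  have hu0 : L (u ^ 8) = 0 := by linarith
  have hueq : C A * X 0 + C B * X 1 = u := by
    have eA : α * sa = A := by rw [hαdef]; field_simp
    have eB : α * b' + β * g = B := by rw [hβdef]; field_simp; ring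
    calc C A * X 0 + C B * X 1
        = C (α * sa) * X 0 + C (α * b' + β * g) * X 1 := by rw [eA, eB]
      _ = u := by
          rw [hudef, hldef, hmdef]
          simp only [map_add, map_mul]
          ring
  rw [hueq]; exact hu0

/-- Let `L` be a nonzero linear functional on binary octics with `L(q⁴) ≥ 0` for
every binary quadratic form `q`. If `p` is a definite binary quadratic form (no nonzero real
zeros), then `L(p⁴) > 0`. -/
theorem dual_positive_on_definite (L : MvPolynomial (Fin 2) ℝ →ₗ[ℝ] ℝ)
    (hL : ∀ q : MvPolynomial (Fin 2) ℝ, q.IsHomogeneous 2 → 0 ≤ L (q ^ 4))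
    (hLne : ∃ f : MvPolynomial (Fin 2) ℝ, f.IsHomogeneous 8 ∧ L f ≠ 0)
    (p : MvPolynomial (Fin 2) ℝ) (hp : p.IsHomogeneous 2)
    (hdef : ∀ v : Fin 2 → ℝ, v ≠ 0 → eval v p ≠ 0) :
    0 < L (p ^ 4) := by
  rcases hLne with ⟨f, hf8, hfL⟩
  by_contra hlt
  push_neg at hlt
  have hz : L (p ^ 4) = 0 := le_antisymm hlt (hL p hp)
  apply hfL
  have hv10 : (![(1:ℝ), 0] : Fin 2 → ℝ) ≠ 0 := by
    intro h; have := congrFun h 0; simp at this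
  rcases (hdef ![1, 0] hv10).lt_or_gt with hneg | hpos
  · have hz' : L ((-p) ^ 4) = 0 := by
      rw [show ((-p : R2)) ^ 4 = p ^ 4 from by ring]; exact hz
    have hdef' : ∀ v : Fin 2 → ℝ, v ≠ 0 → eval v (-p) ≠ 0 := by
      intro v hv; simpa using hdef v hv
    have hpos' : 0 < eval ![(1:ℝ), 0] (-p) := by simpa using hneg
    exact span8 L (main_aux L hL (-p) hp.neg hdef' hz' hpos') hf8
  · exact span8 L (main_aux L hL p hp hdef hz hpos) hf8
end

section
/- There exists a binary octic which is a finite sum of fourth powers of binary quadratic forms but which cannot be written as a sum of two fourth powers of binary quadratic forms; that is, the homogeneous 4-Pythagoras number satisfies p_4(2,8) ≥ 3. -/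
/-!
The octic `x⁸ + (xy)⁴ + (x² + xy)⁴ = x⁴ (x⁴ + y⁴ + (x + y)⁴)` vanishes at `(0, 1)`, so in any
representation `g₁⁴ + g₂⁴` both quadratics are divisible by `x`; setting `x = 1` then writes
`1 + t⁴ + (1 + t)⁴` as `(p₁ + q₁ t)⁴ + (p₂ + q₂ t)⁴`. Writing a quartic as `∑ C(4,k) aₖ tᵏ`, the
catalecticant (Hankel) matrix of `(aₖ)` for a sum of two fourth powers is a sum of two rank-one
matrices, hence singular, whereas `1 + t⁴ + (1 + t)⁴` has `a = (2, 1, 1, 1, 2)` and catalecticant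
determinant `1`.
-/

open MvPolynomial

lemma Finsupp.fin_two_eq_single_add_single (d : Fin 2 →₀ ℕ) :
    d = Finsupp.single 0 (d 0) + Finsupp.single 1 (d 1) := by
  ext i
  fin_cases i <;> simp

theorem MvPolynomial.IsHomogeneous.exists_eq_fin_two_quadratic {R : Type*} [CommSemiring R]
    {g : MvPolynomial (Fin 2) R} (hg : g.IsHomogeneous 2) :
    ∃ p q r : R, g = C p * X 0 ^ 2 + C q * (X 0 * X 1) + C r * X 1 ^ 2 := by
  refine ⟨g.coeff (Finsupp.single 0 2), g.coeff (Finsupp.single 0 1 + Finsupp.single 1 1),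
    g.coeff (Finsupp.single 1 2), ?_⟩
  ext d
  rw [d.fin_two_eq_single_add_single]
  generalize d 0 = a, d 1 = b
  simp only [coeff_add, coeff_C_mul, X, monomial_pow, monomial_mul, coeff_monomial]
  by_cases hab : a + b = 2
  · obtain ⟨rfl, rfl⟩ | ⟨rfl, rfl⟩ | ⟨rfl, rfl⟩ :
        a = 2 ∧ b = 0 ∨ a = 1 ∧ b = 1 ∨ a = 0 ∧ b = 2 := by omega
    all_goals simp [Finsupp.ext_iff, Fin.forall_fin_two]
  · have hne : ¬(2 = a ∧ 0 = b) ∧ ¬(1 = a ∧ 1 = b) ∧ ¬(0 = a ∧ 2 = b) := by omega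
    simp [Finsupp.ext_iff, Fin.forall_fin_two, hne, hg.coeff_eq_zero, Finsupp.degree_eq_sum, hab]

section CommRing

variable {K : Type*} [CommRing K]

def binomialQuartic (a : Fin 5 → K) (t : K) : K :=
  a 0 + 4 * a 1 * t + 6 * a 2 * t ^ 2 + 4 * a 3 * t ^ 3 + a 4 * t ^ 4

def powerMoments (p q : K) : Fin 5 → K := ![p ^ 4, p ^ 3 * q, p ^ 2 * q ^ 2, p * q ^ 3, q ^ 4]

def catalecticant (a : Fin 5 → K) : Matrix (Fin 3) (Fin 3) K :=
  !![a 0, a 1, a 2; a 1, a 2, a 3; a 2, a 3, a 4]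

lemma binomialQuartic_add (a b : Fin 5 → K) (t : K) :
    binomialQuartic (a + b) t = binomialQuartic a t + binomialQuartic b t := by
  simp only [binomialQuartic, Pi.add_apply]
  ring

lemma binomialQuartic_powerMoments (p q t : K) :
    binomialQuartic (powerMoments p q) t = (p + q * t) ^ 4 := by
  simp only [binomialQuartic, powerMoments, Matrix.cons_val_zero, Matrix.cons_val_one,
    Matrix.cons_val]
  ring

-- `catalecticant (powerMoments p q)` is the rank-one matrix `v vᵀ` with `v = (p², pq, q²)`.
lemma det_catalecticant_powerMoments_add (p₁ q₁ p₂ q₂ : K) :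
    (catalecticant (powerMoments p₁ q₁ + powerMoments p₂ q₂)).det = 0 := by
  simp only [catalecticant, powerMoments, Pi.add_apply, Matrix.det_fin_three, Matrix.of_apply,
    Matrix.cons_val', Matrix.cons_val_zero, Matrix.cons_val_one, Matrix.cons_val,
    Matrix.cons_val_fin_one]
  ring

end CommRing

section OrderedField

variable {K : Type*} [Field K] [LinearOrder K] [IsStrictOrderedRing K]

lemma binomialQuartic_injective {a b : Fin 5 → K}
    (h : ∀ t, binomialQuartic a t = binomialQuartic b t) : a = b := by
  have h₀ := h 0
  have h₁ := h 1
  have h₂ := h (-1)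
  have h₃ := h 2
  have h₄ := h (-2)
  simp only [binomialQuartic] at h₀ h₁ h₂ h₃ h₄
  funext k
  fin_cases k <;> simp only [Fin.zero_eta, Fin.mk_one, Fin.reduceFinMk] <;> linarith

lemma not_forall_binomialQuartic_eq_add_pow_four {a : Fin 5 → K}
    (ha : (catalecticant a).det ≠ 0) (p₁ q₁ p₂ q₂ : K) :
    ¬ ∀ t, binomialQuartic a t = (p₁ + q₁ * t) ^ 4 + (p₂ + q₂ * t) ^ 4 := by
  intro h
  have hmoments : a = powerMoments p₁ q₁ + powerMoments p₂ q₂ :=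
    binomialQuartic_injective fun t => by
      rw [binomialQuartic_add, binomialQuartic_powerMoments, binomialQuartic_powerMoments, h]
  exact ha (hmoments ▸ det_catalecticant_powerMoments_add p₁ q₁ p₂ q₂)

end OrderedField

lemma not_forall_one_add_pow_four_add_pow_four_eq (p₁ q₁ p₂ q₂ : ℝ) :
    ¬ ∀ t : ℝ, 1 + t ^ 4 + (1 + t) ^ 4 = (p₁ + q₁ * t) ^ 4 + (p₂ + q₂ * t) ^ 4 := by
  have hdet : (catalecticant ![2, 1, 1, 1, 2] : Matrix (Fin 3) (Fin 3) ℝ).det = 1 := by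
    simp only [catalecticant, Matrix.det_fin_three, Matrix.of_apply, Matrix.cons_val',
      Matrix.cons_val_zero, Matrix.cons_val_one, Matrix.cons_val, Matrix.cons_val_fin_one]
    norm_num
  have hquartic (t : ℝ) : binomialQuartic ![2, 1, 1, 1, 2] t = 1 + t ^ 4 + (1 + t) ^ 4 := by
    simp only [binomialQuartic, Matrix.cons_val_zero, Matrix.cons_val_one, Matrix.cons_val]
    ring
  simpa only [hquartic] using
    not_forall_binomialQuartic_eq_add_pow_four (hdet.trans_ne one_ne_zero) p₁ q₁ p₂ q₂

/-- There is a binary octic which is a finite sum of fourth powers of binary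
quadratic forms but not a sum of two such fourth powers, i.e. `p₄(2,8) ≥ 3`. -/
theorem pythagoras4_binary_octics_ge_three :
    ∃ f : MvPolynomial (Fin 2) ℝ,
      (∃ (m : ℕ) (g : Fin m → MvPolynomial (Fin 2) ℝ),
        (∀ i, (g i).IsHomogeneous 2) ∧ f = ∑ i, g i ^ 4) ∧
      ¬ ∃ g : Fin 2 → MvPolynomial (Fin 2) ℝ,
        (∀ i, (g i).IsHomogeneous 2) ∧ f = ∑ i, g i ^ 4 := by
  have hX₀ : ((X 0 : MvPolynomial (Fin 2) ℝ) ^ 2).IsHomogeneous 2 := by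
    simpa using (isHomogeneous_X ℝ (0 : Fin 2)).pow 2
  have hX₀X₁ : ((X 0 : MvPolynomial (Fin 2) ℝ) * X 1).IsHomogeneous 2 :=
    (isHomogeneous_X ℝ 0).mul (isHomogeneous_X ℝ 1)
  refine ⟨(X 0 ^ 2) ^ 4 + (X 0 * X 1) ^ 4 + (X 0 ^ 2 + X 0 * X 1) ^ 4,
    ⟨3, ![X 0 ^ 2, X 0 * X 1, X 0 ^ 2 + X 0 * X 1], ?_, by simp [Fin.sum_univ_three]⟩, ?_⟩
  · intro i
    fin_cases i
    exacts [hX₀, hX₀X₁, hX₀.add hX₀X₁]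
  rintro ⟨g, hg, hf⟩
  obtain ⟨p₁, q₁, r₁, hg₀⟩ := (hg 0).exists_eq_fin_two_quadratic
  obtain ⟨p₂, q₂, r₂, hg₁⟩ := (hg 1).exists_eq_fin_two_quadratic
  rw [Fin.sum_univ_two, hg₀, hg₁] at hf
  have heval (x y : ℝ) : (x ^ 2) ^ 4 + (x * y) ^ 4 + (x ^ 2 + x * y) ^ 4 =
      (p₁ * x ^ 2 + q₁ * (x * y) + r₁ * y ^ 2) ^ 4 +
        (p₂ * x ^ 2 + q₂ * (x * y) + r₂ * y ^ 2) ^ 4 := by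
    simpa using congrArg (eval ![x, y]) hf
  have hr : r₁ ^ 4 + r₂ ^ 4 = 0 := by simpa using (heval 0 1).symm
  obtain ⟨rfl, rfl⟩ : r₁ = 0 ∧ r₂ = 0 := by
    rw [add_eq_zero_iff_of_nonneg (by positivity) (by positivity)] at hr
    simpa using hr
  exact not_forall_one_add_pow_four_add_pow_four_eq p₁ q₁ p₂ q₂ fun t => by
    simpa using heval 1 t
end

section
/- Let l ∈ ℝ[x,y]_1 be a nonzero linear form. Then the ray {c·l⁸ : c ∈ ℝ, c ≥ 0} is a face of the cone Σ_{2,8}^4: whenever f and g are binary octics, each a finite sum of fourth powers of binary quadratic forms, and f + g = c·l⁸ for some c ≥ 0, then both f and g are nonnegative real multiples of l⁸. -/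
open MvPolynomial

private lemma X0_dvd_of_vanish (w : MvPolynomial (Fin 2) ℝ)
    (h : ∀ s : ℝ, eval ![0, s] w = 0) : (X 0 : MvPolynomial (Fin 2) ℝ) ∣ w := by
  classical
  set r := w.modMonomial (Finsupp.single 0 1) with hr
  have hdec := w.divMonomial_add_modMonomial_single 0
  have hsupp : ∀ m ∈ r.support, m 0 = 0 := by
    intro m hm
    by_contra h0
    have hle : Finsupp.single (0 : Fin 2) 1 ≤ m := by
      rw [Finsupp.single_le_iff]
      omega
    have := coeff_modMonomial_of_le w hle
    rw [← hr] at this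
    exact (mem_support_iff.mp hm) this
  have hre : ∀ x : Fin 2 → ℝ, eval x r = eval ![0, x 1] r := by
    intro x
    rw [eval_eq, eval_eq]
    apply Finset.sum_congr rfl
    intro m hm
    congr 1
    apply Finset.prod_congr rfl
    intro i hi
    have hi0 : i ≠ 0 := by
      intro h0
      subst h0
      exact (Finsupp.mem_support_iff.mp hi) (hsupp m hm)
    have : i = 1 := by omega
    subst this
    simp
  have hr0 : ∀ s : ℝ, eval ![0, s] r = 0 := by
    intro s
    have := congrArg (eval ![0, s]) hdec
    simp only [map_add, map_mul, eval_X] at this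
    simp only [Matrix.cons_val_zero, zero_mul, zero_add] at this
    rw [this]
    exact h s
  have : r = 0 := by
    apply MvPolynomial.funext
    intro x
    rw [map_zero, hre x]
    exact hr0 (x 1)
  rw [← hr, this, add_zero] at hdec
  exact ⟨_, hdec.symm⟩

private lemma eval_bind₁' (x : Fin 2 → ℝ) (g : Fin 2 → MvPolynomial (Fin 2) ℝ)
    (p : MvPolynomial (Fin 2) ℝ) :
    eval x (bind₁ g p) = eval (fun i => eval x (g i)) p := by
  simp only [eval, eval₂Hom_bind₁]

private lemma dvd_core (a b : ℝ) (ha : a ≠ 0) (p : MvPolynomial (Fin 2) ℝ)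
    (h : ∀ x : Fin 2 → ℝ, eval x (C a * X 0 + C b * X 1) = 0 → eval x p = 0) :
    (C a * X 0 + C b * X 1 : MvPolynomial (Fin 2) ℝ) ∣ p := by
  classical
  set l : MvPolynomial (Fin 2) ℝ := C a * X 0 + C b * X 1 with hldef
  set g : Fin 2 → MvPolynomial (Fin 2) ℝ := ![l, X 1] with hg
  set g' : Fin 2 → MvPolynomial (Fin 2) ℝ := ![C a⁻¹ * (X 0 - C b * X 1), X 1] with hg'
  set w := bind₁ g' p with hw
  have hcomp : bind₁ g w = p := by
    rw [hw, bind₁_bind₁]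
    have : (fun i => bind₁ g (g' i)) = X := by
      funext i
      fin_cases i
      · show bind₁ g (g' 0) = X 0
        have e0 : g' 0 = C a⁻¹ * (X 0 - C b * X 1) := rfl
        have e1 : g 0 = l := rfl
        have e2 : g 1 = X 1 := rfl
        rw [e0, map_mul, map_sub, map_mul, bind₁_X_right, bind₁_X_right, e1, e2,
          algHom_C, algHom_C, hldef]
        simp only [algebraMap_eq]
        have hc : C a⁻¹ * C a = (1 : MvPolynomial (Fin 2) ℝ) := by
          rw [← C_mul, inv_mul_cancel₀ ha, C_1]
        linear_combination (X 0 : MvPolynomial (Fin 2) ℝ) * hc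
      · show bind₁ g (g' 1) = X 1
        have e0 : g' 1 = X 1 := rfl
        rw [e0, bind₁_X_right]
        rfl
    rw [this, bind₁_X_left, AlgHom.id_apply]
  have hXdvd : (X 0 : MvPolynomial (Fin 2) ℝ) ∣ w := by
    apply X0_dvd_of_vanish
    intro s
    rw [hw, eval_bind₁']
    apply h
    have h0 : eval ![0, s] (g' 0) = a⁻¹ * (0 - b * s) := by
      simp [hg']
    have h1 : eval ![0, s] (g' 1) = s := by simp [hg']
    simp only [hldef, map_add, map_mul, eval_C, eval_X, h0, h1]
    field_simp
    ring
  obtain ⟨q, hq⟩ := hXdvd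
  refine ⟨bind₁ g q, ?_⟩
  have := congrArg (bind₁ g) hq
  rw [hcomp, map_mul, bind₁_X_right] at this
  rw [this]
  rfl

private lemma linear_decomp (l : MvPolynomial (Fin 2) ℝ) (hl1 : l.IsHomogeneous 1) :
    l = C (coeff (Finsupp.single 0 1) l) * X 0 + C (coeff (Finsupp.single 1 1) l) * X 1 := by
  classical
  apply MvPolynomial.ext
  intro m
  rw [coeff_add, coeff_C_mul, coeff_C_mul, coeff_X', coeff_X']
  by_cases h0 : (Finsupp.single (0:Fin 2) 1) = m
  · subst h0
    rw [if_pos rfl, if_neg (by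
      intro hcon
      have := DFunLike.congr_fun hcon (0 : Fin 2)
      simp [Finsupp.single_apply] at this)]
    ring
  · by_cases h1 : (Finsupp.single (1:Fin 2) 1) = m
    · subst h1
      rw [if_neg h0, if_pos rfl]
      ring
    · rw [if_neg h0, if_neg h1]
      have hdeg : Finsupp.degree m = m 0 + m 1 := by
        rw [show Finsupp.degree m = ∑ i ∈ m.support, m i from rfl,
          Finset.sum_subset (Finset.subset_univ _)
            (fun i _ hi => Finsupp.notMem_support_iff.mp hi),
          Fin.sum_univ_two]
      have : Finsupp.degree m ≠ 1 := by
        rw [hdeg]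
        intro hcon
        have hm0 : m 0 = 0 ∨ m 0 = 1 := by omega
        rcases hm0 with h00 | h00
        · apply h1
          apply Finsupp.ext
          intro i
          fin_cases i <;> simp_all [Finsupp.single_apply]
        · apply h0
          apply Finsupp.ext
          intro i
          fin_cases i <;> simp_all [Finsupp.single_apply]
      rw [hl1.coeff_eq_zero this]
      ring

private lemma dvd_of_vanish (l : MvPolynomial (Fin 2) ℝ) (hl : l ≠ 0) (hl1 : l.IsHomogeneous 1)
    (p : MvPolynomial (Fin 2) ℝ)
    (h : ∀ x : Fin 2 → ℝ, eval x l = 0 → eval x p = 0) : l ∣ p := by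
  classical
  set a := coeff (Finsupp.single 0 1) l with hadef
  set b := coeff (Finsupp.single 1 1) l with hbdef
  have hdec : l = C a * X 0 + C b * X 1 := linear_decomp l hl1
  have hab : a ≠ 0 ∨ b ≠ 0 := by
    by_contra hcon
    push_neg at hcon
    apply hl
    rw [hdec, hcon.1, hcon.2]
    simp
  rcases hab with ha | hb
  · rw [hdec] at h ⊢
    exact dvd_core a b ha p h
  · set e : Fin 2 ≃ Fin 2 := Equiv.swap 0 1 with he
    have hee : ∀ q : MvPolynomial (Fin 2) ℝ, rename e (rename e q) = q := by
      intro q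
      rw [rename_rename]
      have : (⇑e ∘ ⇑e) = id := by
        funext i
        simp [he, Equiv.swap_apply_self]
      rw [this, rename_id, AlgHom.id_apply]
    have hl' : rename (⇑e) l = C b * X 0 + C a * X 1 := by
      rw [hdec]
      simp only [map_add, map_mul, rename_C, rename_X]
      rw [show e 0 = 1 from Equiv.swap_apply_left 0 1, show e 1 = 0 from Equiv.swap_apply_right 0 1]
      ring
    have hdvd : (C b * X 0 + C a * X 1 : MvPolynomial (Fin 2) ℝ) ∣ rename e p := by
      apply dvd_core b a hb
      intro x hx
      rw [eval_rename]
      apply h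
      rw [← hl', eval_rename] at hx
      exact hx
    rw [← hl'] at hdvd
    obtain ⟨q, hq⟩ := hdvd
    have := congrArg (rename (⇑e)) hq
    rw [hee, map_mul, hee] at this
    exact ⟨_, this⟩

private lemma homog_of_mul (l q : MvPolynomial (Fin 2) ℝ) (m n : ℕ)
    (hl : l.IsHomogeneous m) (hl0 : l ≠ 0)
    (h : (l * q).IsHomogeneous (m + n)) : q.IsHomogeneous n := by
  classical
  have hcomp : ∀ k, k ≠ n → homogeneousComponent k q = 0 := by
    intro k hk
    by_cases hkle : k ≤ q.totalDegree
    · have hq' : l * q = ∑ j ∈ Finset.range (q.totalDegree + 1),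
          l * homogeneousComponent j q := by
        rw [← Finset.mul_sum, sum_homogeneousComponent]
      have h1 : homogeneousComponent (m + k) (l * q) = l * homogeneousComponent k q := by
        rw [hq', map_sum, Finset.sum_eq_single_of_mem k (Finset.mem_range.mpr (by omega))]
        · rw [homogeneousComponent_of_mem
            ((mem_homogeneousSubmodule _ _).mpr (hl.mul (homogeneousComponent_isHomogeneous k q))),
            if_pos rfl]
        · intro j _ hjk
          rw [homogeneousComponent_of_mem
            ((mem_homogeneousSubmodule _ _).mpr (hl.mul (homogeneousComponent_isHomogeneous j q))),
            if_neg (by omega)]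
      have h2 : homogeneousComponent (m + k) (l * q) = 0 := by
        rw [homogeneousComponent_of_mem ((mem_homogeneousSubmodule _ _).mpr h),
          if_neg (by omega)]
      rw [h2] at h1
      rcases mul_eq_zero.mp h1.symm with h3 | h3
      · exact absurd h3 hl0
      · exact h3
    · exact homogeneousComponent_eq_zero _ q (by omega)
  have hq : q = homogeneousComponent n q := by
    conv_lhs => rw [← sum_homogeneousComponent q]
    by_cases hn : n ≤ q.totalDegree
    · rw [Finset.sum_eq_single_of_mem n (Finset.mem_range.mpr (by omega))]
      intro j _ hj
      exact hcomp j hj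
    · rw [Finset.sum_eq_zero, homogeneousComponent_eq_zero _ q (by omega)]
      intro j hj
      exact hcomp j (by rw [Finset.mem_range] at hj; omega)
  rw [hq]
  exact homogeneousComponent_isHomogeneous n q

private lemma eq_C_of_homog0 (q : MvPolynomial (Fin 2) ℝ) (h : q.IsHomogeneous 0) :
    q = C (coeff 0 q) := by
  ext m
  rw [coeff_C]
  split_ifs with h0
  · rw [← h0]
  · refine h.coeff_eq_zero ?_
    rw [Ne, Finsupp.degree_eq_zero_iff]
    intro hm
    exact h0 (hm ▸ rfl)

private lemma quartic_sum_eq_zero {m : ℕ} (y : Fin m → ℝ) (B : ℝ) (hB : 0 ≤ B)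
    (h : (∑ i, (y i)^4) + B = 0) : ∀ i, y i = 0 := by
  intro i
  have hnn : ∀ j ∈ Finset.univ, (0:ℝ) ≤ (y j)^4 := by
    intro j _
    positivity
  have hsum : (0:ℝ) ≤ ∑ j, (y j)^4 := Finset.sum_nonneg hnn
  have hzero : ∑ j, (y j)^4 = 0 := by linarith
  have := (Finset.sum_eq_zero_iff_of_nonneg hnn).mp hzero i (Finset.mem_univ i)
  exact pow_eq_zero_iff (by norm_num) |>.mp this

private lemma side (l : MvPolynomial (Fin 2) ℝ) (hl : l ≠ 0) (hl1 : l.IsHomogeneous 1)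
    (f g : MvPolynomial (Fin 2) ℝ)
    (hf : ∃ (m : ℕ) (u : Fin m → MvPolynomial (Fin 2) ℝ),
      (∀ i, (u i).IsHomogeneous 2) ∧ f = ∑ i, u i ^ 4)
    (hg : ∃ (m : ℕ) (u : Fin m → MvPolynomial (Fin 2) ℝ),
      (∀ i, (u i).IsHomogeneous 2) ∧ g = ∑ i, u i ^ 4)
    (c : ℝ) (hfg : f + g = c • l ^ 8) :
    ∃ c₁ : ℝ, 0 ≤ c₁ ∧ f = c₁ • l ^ 8 := by
  classical
  obtain ⟨mf, u, hu2, rfl⟩ := hf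
  obtain ⟨mg, v, hv2, rfl⟩ := hg
  -- pointwise vanishing of the u i (and v j) on the zero set of l
  have hvanish : ∀ x : Fin 2 → ℝ, eval x l = 0 →
      (∀ i, eval x (u i) = 0) ∧ (∀ j, eval x (v j) = 0) := by
    intro x hx
    have h0 := congrArg (eval x) hfg
    simp only [map_add, map_sum, map_pow, smul_eval, hx] at h0
    norm_num at h0
    constructor
    · refine quartic_sum_eq_zero (fun i => eval x (u i)) (∑ j, (eval x (v j))^4)
        (Finset.sum_nonneg (fun j _ => by positivity)) h0
    · refine quartic_sum_eq_zero (fun j => eval x (v j)) (∑ i, (eval x (u i))^4)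
        (Finset.sum_nonneg (fun i _ => by positivity)) (by linarith)
  -- first division
  have hdiv1u : ∀ i, ∃ q, u i = l * q := fun i =>
    dvd_of_vanish l hl hl1 (u i) (fun x hx => (hvanish x hx).1 i)
  have hdiv1v : ∀ j, ∃ q, v j = l * q := fun j =>
    dvd_of_vanish l hl hl1 (v j) (fun x hx => (hvanish x hx).2 j)
  choose q hq using hdiv1u
  choose r hr using hdiv1v
  have hq1 : ∀ i, (q i).IsHomogeneous 1 := fun i =>
    homog_of_mul l (q i) 1 1 hl1 hl (by rw [← hq i]; exact hu2 i)
  have hr1 : ∀ j, (r j).IsHomogeneous 1 := fun j =>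
    homog_of_mul l (r j) 1 1 hl1 hl (by rw [← hr j]; exact hv2 j)
  -- cancel l^4
  have hcancel : (∑ i, (q i)^4) + (∑ j, (r j)^4) = c • l^4 := by
    apply mul_left_cancel₀ (pow_ne_zero 4 hl)
    have lhs : l^4 * ((∑ i, (q i)^4) + (∑ j, (r j)^4))
        = (∑ i, u i ^ 4) + (∑ j, v j ^ 4) := by
      rw [mul_add, Finset.mul_sum, Finset.mul_sum]
      refine congrArg₂ (· + ·) ?_ ?_
      · apply Finset.sum_congr rfl
        intro i _
        rw [hq i, mul_pow]
      · apply Finset.sum_congr rfl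
        intro j _
        rw [hr j, mul_pow]
    rw [lhs, hfg, smul_eq_C_mul, smul_eq_C_mul]
    ring
  -- second pointwise vanishing
  have hvanish2 : ∀ x : Fin 2 → ℝ, eval x l = 0 → (∀ i, eval x (q i) = 0) := by
    intro x hx
    have h0 := congrArg (eval x) hcancel
    simp only [map_add, map_sum, map_pow, smul_eval, hx] at h0
    norm_num at h0
    exact quartic_sum_eq_zero (fun i => eval x (q i)) (∑ j, (eval x (r j))^4)
      (Finset.sum_nonneg (fun j _ => by positivity)) h0
  have hdiv2 : ∀ i, ∃ s, q i = l * s := fun i =>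
    dvd_of_vanish l hl hl1 (q i) (fun x hx => hvanish2 x hx i)
  choose s hs using hdiv2
  have hs0 : ∀ i, (s i).IsHomogeneous 0 := fun i =>
    homog_of_mul l (s i) 1 0 hl1 hl (by rw [← hs i]; exact hq1 i)
  have hsC : ∀ i, s i = C (coeff 0 (s i)) := fun i => eq_C_of_homog0 _ (hs0 i)
  refine ⟨∑ i, (coeff 0 (s i))^4, Finset.sum_nonneg (fun i _ => by positivity), ?_⟩
  rw [smul_eq_C_mul, map_sum, Finset.sum_mul]
  apply Finset.sum_congr rfl
  intro i _
  rw [hq i, hs i, hsC i]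
  simp only [coeff_zero_C]
  rw [C_pow]
  ring

/-- For a nonzero linear form `l`, the ray `{c·l⁸ : c ≥ 0}` is a face of
`Σ_{2,8}^4`: if `f` and `g` are finite sums of fourth powers of binary quadratic forms and
`f + g = c·l⁸` with `c ≥ 0`, then `f` and `g` are nonnegative multiples of `l⁸`. -/
theorem ray_l8_is_face (l : MvPolynomial (Fin 2) ℝ) (hl : l ≠ 0) (hl1 : l.IsHomogeneous 1)
    (f g : MvPolynomial (Fin 2) ℝ)
    (hf : ∃ (m : ℕ) (u : Fin m → MvPolynomial (Fin 2) ℝ),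
      (∀ i, (u i).IsHomogeneous 2) ∧ f = ∑ i, u i ^ 4)
    (hg : ∃ (m : ℕ) (u : Fin m → MvPolynomial (Fin 2) ℝ),
      (∀ i, (u i).IsHomogeneous 2) ∧ g = ∑ i, u i ^ 4)
    (c : ℝ) (hc : 0 ≤ c) (hfg : f + g = c • l ^ 8) :
    (∃ c₁ : ℝ, 0 ≤ c₁ ∧ f = c₁ • l ^ 8) ∧ (∃ c₂ : ℝ, 0 ≤ c₂ ∧ g = c₂ • l ^ 8) := by
  exact ⟨side l hl hl1 f g hf hg c hfg,
    side l hl hl1 g f hg hf c (by rw [add_comm]; exact hfg)⟩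
end
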